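/- arXiv:1607.01955 — 6 statements merged into one kernel-verified Lean document; each statement's English description precedes it below -/
import Mathlib

section
/- Let 1 < δ < 2 and T > 0, and define v(x,t) := E_δ(-t^δ) sin x on [0,π] × [0,T]. Then v satisfies D_t^δ v(x,t) - ∂²v/∂x²(x,t) = 0 for all (x,t) ∈ (0,π) × (0,T], the boundary conditions v(0,t) = v(π,t) = 0, and the initial conditions v(x,0) = sin x and (∂v/∂t)(x,0) = 0 for all x, where D_t^δ v(x,t) := (1/Γ(2-δ)) ∫_0^t (t-s)^{1-δ} (∂²v/∂t²)(x,s) ds. -/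
open Real Filter Set Topology

/-- The Mittag-Leffler function `E_α(z) = Σ_{k=0}^∞ z^k / Γ(αk+1)`. -/
noncomputable def mittagLeffler (α z : ℝ) : ℝ := ∑' k : ℕ, z ^ k / Real.Gamma (α * k + 1)

open MeasureTheory

lemma ML_summable_aux {δ : ℝ} (hδ1 : 1 < δ) (c r : ℝ) (hc : 0 < c) :
    Summable (fun k : ℕ => ((k : ℝ) + 1) ^ 2 * r ^ k / Real.Gamma (δ * k + c)) := by
  have hδ0 : (0:ℝ) < δ := by linarith
  have hΓpos : ∀ k : ℕ, 0 < Real.Gamma (δ * k + c) := fun k => by positivity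
  apply summable_of_ratio_norm_eventually_le (r := 1/2) (by norm_num)
  obtain ⟨N, hN⟩ : ∃ N : ℕ, (2:ℝ) + 8 * |r| ≤ δ * N + c := by
    obtain ⟨N, hN⟩ := exists_nat_ge ((2 + 8 * |r|) / δ)
    exact ⟨N, by rw [div_le_iff₀ hδ0] at hN; nlinarith [hΓpos 0]⟩
  filter_upwards [eventually_ge_atTop N] with k hk
  have hkN : (N:ℝ) ≤ (k:ℝ) := by exact_mod_cast hk
  have h2 : (2:ℝ) + 8 * |r| ≤ δ * k + c := le_trans hN (by nlinarith)
  have hx : (2:ℝ) ≤ δ * k + c := by nlinarith [abs_nonneg r]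
  have hmono : (δ * k + c) * Real.Gamma (δ * k + c) ≤ Real.Gamma (δ * (k+1) + c) := by
    rw [← Real.Gamma_add_one (by positivity)]
    apply (Real.Gamma_strictMonoOn_Ici.monotoneOn) (by simp [mem_Ici]; linarith)
      (by simp [mem_Ici]; push_cast; nlinarith)
    push_cast; nlinarith
  have hΓ1 := hΓpos k
  have hΓ2 := hΓpos (k+1)
  rw [Real.norm_eq_abs, Real.norm_eq_abs, abs_div, abs_div,
    abs_of_pos hΓ1, abs_of_pos hΓ2, ← mul_div_assoc, div_le_div_iff₀ hΓ2 hΓ1]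
  have hrk : (0:ℝ) ≤ |r|^k := pow_nonneg (abs_nonneg r) k
  have hxx : (0:ℝ) ≤ ((k:ℝ)+1)^2 := sq_nonneg _
  have ha1 : |r ^ (k+1)| = |r| * |r|^k := by rw [abs_pow, pow_succ]; ring
  have ha2 : |((k:ℝ)+1)^2 * r^k| = ((k:ℝ)+1)^2 * |r|^k := by
    rw [abs_mul, abs_pow, abs_pow, abs_of_pos (show (0:ℝ) < (k:ℝ)+1 by positivity)]
  have e1 : |(↑(k+1) + 1 : ℝ)^2 * r^(k+1)| ≤ 4 * ((k:ℝ)+1)^2 * (|r| * |r|^k) := by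
    push_cast
    rw [abs_mul, abs_pow, ha1, abs_of_pos (show (0:ℝ) < (k:ℝ)+1+1 by positivity)]
    have hb : ((k:ℝ)+1+1)^2 ≤ 4 * ((k:ℝ)+1)^2 := by nlinarith [Nat.cast_nonneg (α := ℝ) k]
    nlinarith [mul_nonneg (abs_nonneg r) hrk]
  calc |(↑(k+1) + 1 : ℝ)^2 * r^(k+1)| * Real.Gamma (δ * k + c)
      ≤ (4 * ((k:ℝ)+1)^2 * (|r| * |r|^k)) * Real.Gamma (δ * k + c) :=
        mul_le_mul_of_nonneg_right e1 hΓ1.le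
    _ ≤ (1/2 * (((k:ℝ)+1)^2 * |r|^k)) * ((δ * k + c) * Real.Gamma (δ * k + c)) := by
        have key : 4 * ((k:ℝ)+1)^2 * (|r| * |r|^k) ≤ 1/2 * (((k:ℝ)+1)^2 * |r|^k) * (δ * k + c) := by
          nlinarith [mul_nonneg hxx hrk, mul_nonneg (mul_nonneg hxx hrk) (show (0:ℝ) ≤ δ*k+c - 8*|r| by linarith)]
        nlinarith [mul_le_mul_of_nonneg_right key hΓ1.le, mul_nonneg (mul_nonneg hxx hrk) hΓ1.le]
    _ ≤ (1/2 * |((k:ℝ)+1)^2 * r^k|) * Real.Gamma (δ * (↑(k+1)) + c) := by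
        rw [mul_assoc (1/2:ℝ), ← ha2, ← mul_assoc]
        apply mul_le_mul_of_nonneg_left _ (by positivity)
        convert hmono using 2
        · rfl
        · push_cast; ring
  done

lemma ML_hasDerivAt_f {δ : ℝ} (hδ1 : 1 < δ) (hδ2 : δ < 2) {t : ℝ} (ht : 0 < t) :
    HasDerivAt (fun y : ℝ => ∑' k : ℕ, (-1:ℝ)^k * y ^ (δ*k) / Real.Gamma (δ*k+1))
      (∑' k : ℕ, (-1:ℝ)^(k+1) * t ^ (δ*(k+1)-1) / Real.Gamma (δ*(k+1))) t := by
  have hδ0 : (0:ℝ) < δ := by linarith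
  set a : ℝ := t/2 with ha
  set b : ℝ := t+1 with hb
  have ha0 : 0 < a := by positivity
  have hb0 : (0:ℝ) < b := by linarith
  have hΓpos : ∀ k : ℕ, (0:ℝ) < Real.Gamma (δ*k+1) := fun k => by positivity
  have hmem : t ∈ Ioo a b := ⟨by simp only [ha]; linarith, by simp only [hb]; linarith⟩
  set g : ℕ → ℝ → ℝ := fun n y => (-1:ℝ)^n * y ^ (δ*n) / Real.Gamma (δ*n+1) with hg
  set g' : ℕ → ℝ → ℝ := fun n y => (-1:ℝ)^n * (δ*n * y ^ (δ*n-1)) / Real.Gamma (δ*n+1) with hg'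
  set u : ℕ → ℝ := fun n => (2/a) * (((n:ℝ)+1)^2 * (b^δ)^n / Real.Gamma (δ*n+1)) with hu
  have hderiv : ∀ n : ℕ, ∀ y ∈ Ioo a b, HasDerivAt (g n) (g' n y) y := by
    intro n y hy
    have hy0 : 0 < y := lt_trans ha0 hy.1
    have := ((Real.hasDerivAt_rpow_const (x := y) (p := δ*n) (Or.inl hy0.ne')).const_mul
      ((-1:ℝ)^n)).div_const (Real.Gamma (δ*n+1))
    convert this using 1
  have hbound : ∀ n : ℕ, ∀ y ∈ Ioo a b, ‖g' n y‖ ≤ u n := by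
    intro n y hy
    have hy0 : 0 < y := lt_trans ha0 hy.1
    have hyb : y ≤ b := hy.2.le
    have hrp : y ^ (δ*n-1) = y ^ (δ*n) / y := by
      rw [Real.rpow_sub hy0, Real.rpow_one]
    have h1 : y ^ (δ*n) ≤ (b^δ)^n := by
      rw [← Real.rpow_natCast (b^δ) n, ← Real.rpow_mul hb0.le]
      exact Real.rpow_le_rpow hy0.le hyb (by positivity)
    have h2 : y ^ (δ*n) / y ≤ (b^δ)^n / a :=
      div_le_div₀ (by positivity) h1 ha0 hy.1.le
    have h3 : δ * n ≤ 2*((n:ℝ)+1)^2 := by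
      nlinarith [Nat.cast_nonneg (α := ℝ) n, sq_nonneg ((n:ℝ)+1),
        mul_nonneg (by linarith : (0:ℝ) ≤ 2-δ) (Nat.cast_nonneg (α := ℝ) n)]
    rw [hg', Real.norm_eq_abs, abs_div, abs_of_pos (hΓpos n), abs_mul, abs_pow, abs_neg, abs_one,
      one_pow, one_mul, abs_mul, abs_of_nonneg (by positivity : (0:ℝ) ≤ δ*(n:ℝ)),
      abs_of_nonneg (by positivity : (0:ℝ) ≤ y ^ (δ*(n:ℝ)-1))]
    show _ ≤ 2/a * (((n:ℝ)+1)^2 * (b^δ)^n / Real.Gamma (δ*n+1))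
    rw [← mul_div_assoc]
    apply div_le_div₀ (by positivity) _ (hΓpos n) le_rfl
    calc δ*(n:ℝ) * y ^ (δ*(n:ℝ)-1) ≤ (2*((n:ℝ)+1)^2) * ((b^δ)^n / a) := by
          apply mul_le_mul h3 (by rw [hrp]; exact h2) (by positivity) (by positivity)
      _ = 2/a * (((n:ℝ)+1)^2 * (b^δ)^n) := by ring
  have hsum_u : Summable u := (ML_summable_aux hδ1 1 (b^δ) one_pos).mul_left _
  have hsum0 : Summable fun n => g n t := by
    apply Summable.of_norm_bounded (ML_summable_aux hδ1 1 (t^δ) one_pos)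
    intro n
    rw [hg, Real.norm_eq_abs, abs_div, abs_of_pos (hΓpos n), abs_mul, abs_pow, abs_neg, abs_one,
      one_pow, one_mul, abs_of_nonneg (by positivity : (0:ℝ) ≤ t ^ (δ*(n:ℝ)))]
    have h1 : t ^ (δ*(n:ℝ)) = (t^δ)^n := by
      rw [← Real.rpow_natCast (t^δ) n, ← Real.rpow_mul ht.le]
    rw [h1]
    gcongr
    have h2 : (1:ℝ) ≤ ((n:ℝ)+1)^2 := by nlinarith [Nat.cast_nonneg (α := ℝ) n]
    calc (t^δ)^n = 1 * (t^δ)^n := (one_mul _).symm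
      _ ≤ ((n:ℝ)+1)^2 * (t^δ)^n :=
        mul_le_mul_of_nonneg_right h2 (pow_nonneg (Real.rpow_nonneg ht.le δ) n)
  have H := hasDerivAt_tsum_of_isPreconnected hsum_u isOpen_Ioo isPreconnected_Ioo
    hderiv hbound hmem hsum0 hmem
  have hsumg' : Summable fun n => g' n t := by
    apply Summable.of_norm_bounded hsum_u
    exact fun n => hbound n t hmem
  have key : ∑' n : ℕ, g' n t = ∑' k : ℕ, (-1:ℝ)^(k+1) * t ^ (δ*(k+1)-1) / Real.Gamma (δ*(k+1)) := by
    rw [Summable.tsum_eq_zero_add hsumg']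
    have h0 : g' 0 t = 0 := by simp [hg']
    rw [h0, zero_add]
    apply tsum_congr
    intro k
    have hA : δ*((k:ℝ)+1) ≠ 0 := by positivity
    have hΓrec : Real.Gamma (δ*((k:ℝ)+1)+1) = (δ*((k:ℝ)+1)) * Real.Gamma (δ*((k:ℝ)+1)) :=
      Real.Gamma_add_one hA
    have hcast : ((k+1:ℕ):ℝ) = (k:ℝ)+1 := by push_cast; ring
    rw [hg']
    simp only [hcast, hΓrec]
    rw [mul_div_assoc, mul_div_mul_left _ _ hA, mul_div_assoc]
  rw [← key]
  exact H

lemma ML_hasDerivAt_g {δ : ℝ} (hδ1 : 1 < δ) (hδ2 : δ < 2) {t : ℝ} (ht : 0 < t) :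
    HasDerivAt (fun y : ℝ => ∑' k : ℕ, (-1:ℝ)^(k+1) * y ^ (δ*(k+1)-1) / Real.Gamma (δ*(k+1)))
      (∑' k : ℕ, (-1:ℝ)^(k+1) * t ^ (δ*(k+1)-2) / Real.Gamma (δ*(k+1)-1)) t := by
  have hδ0 : (0:ℝ) < δ := by linarith
  set a : ℝ := t/2 with ha
  set b : ℝ := t+1 with hb
  have ha0 : 0 < a := by positivity
  have hb0 : (0:ℝ) < b := by simp only [hb]; linarith
  have hΓpos : ∀ k : ℕ, (0:ℝ) < Real.Gamma (δ*((k:ℝ)+1)) := fun k => by positivity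
  have hmem : t ∈ Ioo a b := ⟨by simp only [ha]; linarith, by simp only [hb]; linarith⟩
  set g : ℕ → ℝ → ℝ := fun n y => (-1:ℝ)^(n+1) * y ^ (δ*(n+1)-1) / Real.Gamma (δ*(n+1)) with hg
  set g' : ℕ → ℝ → ℝ :=
    fun n y => (-1:ℝ)^(n+1) * ((δ*(n+1)-1) * y ^ (δ*(n+1)-1-1)) / Real.Gamma (δ*(n+1)) with hg'
  set u : ℕ → ℝ := fun n =>
    (2*b^δ/a^2) * (((n:ℝ)+1)^2 * (b^δ)^n / Real.Gamma (δ*n+δ)) with hu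
  have hΓeq : ∀ n : ℕ, Real.Gamma (δ*((n:ℝ)+1)) = Real.Gamma (δ*n+δ) := by
    intro n; ring_nf
  have hderiv : ∀ n : ℕ, ∀ y ∈ Ioo a b, HasDerivAt (g n) (g' n y) y := by
    intro n y hy
    have hy0 : 0 < y := lt_trans ha0 hy.1
    have := ((Real.hasDerivAt_rpow_const (x := y) (p := δ*(n+1)-1) (Or.inl hy0.ne')).const_mul
      ((-1:ℝ)^(n+1))).div_const (Real.Gamma (δ*(n+1)))
    convert this using 1
  have hbound : ∀ n : ℕ, ∀ y ∈ Ioo a b, ‖g' n y‖ ≤ u n := by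
    intro n y hy
    have hy0 : 0 < y := lt_trans ha0 hy.1
    have hyb : y ≤ b := hy.2.le
    have hcoef : (0:ℝ) ≤ δ*((n:ℝ)+1) - 1 := by nlinarith [Nat.cast_nonneg (α := ℝ) n]
    have hrp : y ^ (δ*((n:ℝ)+1)-1-1) = y ^ (δ*((n:ℝ)+1)) / y^(2:ℝ) := by
      rw [show δ*((n:ℝ)+1)-1-1 = δ*((n:ℝ)+1) - 2 by ring, Real.rpow_sub hy0]
    have h1 : y ^ (δ*((n:ℝ)+1)) ≤ b^δ * (b^δ)^n := by
      have h1a : y ^ (δ*((n:ℝ)+1)) ≤ b ^ (δ*((n:ℝ)+1)) :=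
        Real.rpow_le_rpow hy0.le hyb (by positivity)
      apply h1a.trans_eq
      rw [show δ*((n:ℝ)+1) = δ + δ*(n:ℝ) by ring, Real.rpow_add hb0,
        Real.rpow_mul hb0.le, Real.rpow_natCast]
    have h2 : a^(2:ℝ) ≤ y^(2:ℝ) := Real.rpow_le_rpow ha0.le hy.1.le (by norm_num)
    have ha2 : (0:ℝ) < a^(2:ℝ) := Real.rpow_pos_of_pos ha0 2
    have h3 : y ^ (δ*((n:ℝ)+1)) / y^(2:ℝ) ≤ (b^δ * (b^δ)^n) / a^(2:ℝ) :=
      div_le_div₀ (by positivity) h1 ha2 h2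
    have h4 : δ*((n:ℝ)+1)-1 ≤ 2*((n:ℝ)+1)^2 := by
      nlinarith [Nat.cast_nonneg (α := ℝ) n, sq_nonneg ((n:ℝ)+1),
        mul_nonneg (by linarith : (0:ℝ) ≤ 2-δ) (Nat.cast_nonneg (α := ℝ) n)]
    rw [hg', Real.norm_eq_abs, abs_div, abs_of_pos (hΓpos n), abs_mul, abs_pow, abs_neg, abs_one,
      one_pow, one_mul, abs_mul, abs_of_nonneg hcoef,
      abs_of_nonneg (by positivity : (0:ℝ) ≤ y ^ (δ*((n:ℝ)+1)-1-1))]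
    show _ ≤ (2*b^δ/a^2) * (((n:ℝ)+1)^2 * (b^δ)^n / Real.Gamma (δ*n+δ))
    rw [← mul_div_assoc, ← hΓeq n]
    apply div_le_div₀ (by positivity) _ (hΓpos n) le_rfl
    calc (δ*((n:ℝ)+1)-1) * y ^ (δ*((n:ℝ)+1)-1-1)
        ≤ (2*((n:ℝ)+1)^2) * ((b^δ * (b^δ)^n) / a^(2:ℝ)) := by
          apply mul_le_mul h4 (by rw [hrp]; exact h3) (by positivity) (by positivity)
      _ = (2*b^δ/a^(2:ℝ)) * (((n:ℝ)+1)^2 * (b^δ)^n) := by ring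
      _ = (2*b^δ/a^2) * (((n:ℝ)+1)^2 * (b^δ)^n) := by
          rw [show a^(2:ℝ) = a^(2:ℕ) by rw [← Real.rpow_natCast a 2]; norm_num]
  have hsum_u : Summable u := (ML_summable_aux hδ1 δ (b^δ) hδ0).mul_left _
  have hsum0 : Summable fun n => g n t := by
    apply Summable.of_norm_bounded (((ML_summable_aux hδ1 δ (t^δ) hδ0)).mul_left (t^δ/t))
    intro n
    rw [hg, Real.norm_eq_abs, abs_div, abs_of_pos (hΓpos n), abs_mul, abs_pow, abs_neg, abs_one,
      one_pow, one_mul, abs_of_nonneg (by positivity : (0:ℝ) ≤ t ^ (δ*((n:ℝ)+1)-1))]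
    have h1 : t ^ (δ*((n:ℝ)+1)-1) = (t^δ/t) * (t^δ)^n := by
      calc t ^ (δ*((n:ℝ)+1)-1) = t ^ (δ+δ*(n:ℝ)-1) := by ring_nf
        _ = t^(δ+δ*(n:ℝ))/t^(1:ℝ) := Real.rpow_sub ht _ _
        _ = (t^δ * t^(δ*(n:ℝ)))/t := by rw [Real.rpow_one, Real.rpow_add ht]
        _ = (t^δ/t) * (t^δ)^n := by rw [Real.rpow_mul ht.le, Real.rpow_natCast]; ring
    rw [h1, hΓeq n]
    have h2 : (1:ℝ) ≤ ((n:ℝ)+1)^2 := by nlinarith [Nat.cast_nonneg (α := ℝ) n]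
    have h3 : (0:ℝ) ≤ (t^δ/t) * (t^δ)^n / Real.Gamma (δ*n+δ) := by positivity
    calc (t^δ/t) * (t^δ)^n / Real.Gamma (δ*n+δ)
        = 1 * ((t^δ/t) * (t^δ)^n / Real.Gamma (δ*n+δ)) := (one_mul _).symm
      _ ≤ ((n:ℝ)+1)^2 * ((t^δ/t) * (t^δ)^n / Real.Gamma (δ*n+δ)) :=
          mul_le_mul_of_nonneg_right h2 h3
      _ = (t^δ/t) * (((n:ℝ)+1)^2 * (t^δ)^n / Real.Gamma (δ*n+δ)) := by ring
  have H := hasDerivAt_tsum_of_isPreconnected hsum_u isOpen_Ioo isPreconnected_Ioo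
    hderiv hbound hmem hsum0 hmem
  have key : ∑' n : ℕ, g' n t
      = ∑' k : ℕ, (-1:ℝ)^(k+1) * t ^ (δ*(k+1)-2) / Real.Gamma (δ*(k+1)-1) := by
    apply tsum_congr
    intro k
    have hA : δ*((k:ℝ)+1) - 1 ≠ 0 := by nlinarith [Nat.cast_nonneg (α := ℝ) k]
    have hΓrec : Real.Gamma (δ*((k:ℝ)+1)) = (δ*((k:ℝ)+1)-1) * Real.Gamma (δ*((k:ℝ)+1)-1) := by
      have h := Real.Gamma_add_one hA
      rwa [sub_add_cancel] at h
    rw [hg']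
    simp only [hΓrec]
    rw [mul_div_assoc, mul_div_mul_left _ _ hA, mul_div_assoc,
      show δ*((k:ℝ)+1)-1-1 = δ*((k:ℝ)+1)-2 by ring]
  rw [← key]
  exact H

lemma ML_beta_integrable {a b t : ℝ} (ha : 0 < a) (hb : 0 < b) (ht : 0 < t) :
    IntervalIntegrable (fun s => s^(a-1) * (t-s)^(b-1)) volume 0 t := by
  apply IntervalIntegrable.trans (b := t/2)
  · apply IntervalIntegrable.mul_continuousOn
    · exact intervalIntegral.intervalIntegrable_rpow' (by linarith)
    · apply ContinuousOn.rpow_const (continuousOn_const.sub continuousOn_id)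
      intro x hx
      rw [uIcc_of_le (by linarith)] at hx
      exact Or.inl (by simp only [Pi.sub_apply, id]; intro h; nlinarith [hx.2, hx.1, sub_eq_zero.mp h])
  · apply IntervalIntegrable.continuousOn_mul
    · have h1 : IntervalIntegrable (fun x : ℝ => x^(b-1)) volume 0 (t/2) :=
        intervalIntegral.intervalIntegrable_rpow' (by linarith)
      have h2 := h1.comp_sub_left t
      rw [show t - 0 = t by ring, show t - t/2 = t/2 by ring] at h2
      exact h2.symm
    · apply ContinuousOn.rpow_const continuousOn_id
      intro x hx
      rw [uIcc_of_le (by linarith)] at hx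
      exact Or.inl (by simp only [id]; intro h; nlinarith [hx.1])

lemma ML_beta {a b t : ℝ} (ha : 0 < a) (hb : 0 < b) (ht : 0 < t) :
    ∫ s in (0:ℝ)..t, s^(a-1) * (t-s)^(b-1)
      = Real.Gamma a * Real.Gamma b / Real.Gamma (a+b) * t^(a+b-1) := by
  have hab : (0:ℝ) < a + b := by linarith
  have hΓab : Real.Gamma (a+b) ≠ 0 := (Real.Gamma_pos_of_pos hab).ne'
  have hC := Complex.betaIntegral_scaled (a:ℂ) (b:ℂ) ht
  have hβ : Complex.betaIntegral (a:ℂ) (b:ℂ)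
      = ((Real.Gamma a * Real.Gamma b / Real.Gamma (a+b) : ℝ) : ℂ) := by
    have h2 := Complex.Gamma_mul_Gamma_eq_betaIntegral
      (s := (a:ℂ)) (t := (b:ℂ)) (by simpa using ha) (by simpa using hb)
    have hΓab'' : Complex.Gamma (((a+b:ℝ)):ℂ) ≠ 0 := by
      rw [Complex.Gamma_ofReal]
      exact_mod_cast hΓab
    push_cast
    rw [← Complex.Gamma_ofReal, ← Complex.Gamma_ofReal, ← Complex.Gamma_ofReal,
      eq_div_iff (by push_cast at hΓab'' ⊢; exact hΓab'')]
    push_cast at h2 ⊢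
    linear_combination (-1 : ℂ) * h2
  have hL : (∫ x in (0:ℝ)..t, (x:ℂ) ^ ((a:ℂ) - 1) * ((t:ℂ) - (x:ℂ)) ^ ((b:ℂ) - 1))
      = ((∫ s in (0:ℝ)..t, s^(a-1) * (t-s)^(b-1) : ℝ) : ℂ) := by
    rw [← intervalIntegral.integral_ofReal]
    apply intervalIntegral.integral_congr_ae
    filter_upwards [] with x
    intro hx
    rw [uIoc_of_le ht.le] at hx
    have hx0 : 0 ≤ x := hx.1.le
    have htx : 0 ≤ t - x := by linarith [hx.2]
    rw [show ((a:ℂ)-1) = ((a-1:ℝ):ℂ) by push_cast; ring,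
      show ((b:ℂ)-1) = ((b-1:ℝ):ℂ) by push_cast; ring,
      show ((t:ℂ) - (x:ℂ)) = ((t-x:ℝ):ℂ) by push_cast; ring,
      ← Complex.ofReal_cpow hx0, ← Complex.ofReal_cpow htx]
    push_cast
    ring
  rw [hL, hβ] at hC
  have hR : ((t:ℂ)) ^ ((a:ℂ) + (b:ℂ) - 1) = ((t ^ (a+b-1) : ℝ) : ℂ) := by
    rw [show ((a:ℂ)+(b:ℂ)-1) = ((a+b-1:ℝ):ℂ) by push_cast; ring, ← Complex.ofReal_cpow ht.le]
  rw [hR] at hC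
  have h3 := congrArg Complex.re hC
  simpa [mul_comm] using h3

private lemma ML_cancel {X Y c T b : ℝ} (hX : X ≠ 0) (hY : Y ≠ 0) :
    (c/X) * (X*b/Y*T) = b * (c*T/Y) := by
  field_simp

lemma ML_frac {δ : ℝ} (hδ1 : 1 < δ) (hδ2 : δ < 2) {t : ℝ} (ht : 0 < t) :
    (1/Real.Gamma (2-δ)) * (∫ s in (0:ℝ)..t, (t-s)^(1-δ) *
        (∑' k : ℕ, (-1:ℝ)^(k+1) * s ^ (δ*(k+1)-2) / Real.Gamma (δ*(k+1)-1)))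
      = - ∑' k : ℕ, (-1:ℝ)^k * t ^ (δ*k) / Real.Gamma (δ*k+1) := by
  have hδ0 : (0:ℝ) < δ := by linarith
  have hb0 : (0:ℝ) < 2 - δ := by linarith
  have hΓb : (0:ℝ) < Real.Gamma (2-δ) := Real.Gamma_pos_of_pos hb0
  have hApos : ∀ k : ℕ, (0:ℝ) < δ*((k:ℝ)+1)-1 := by
    intro k; nlinarith [Nat.cast_nonneg (α := ℝ) k]
  have hΓa : ∀ k : ℕ, (0:ℝ) < Real.Gamma (δ*((k:ℝ)+1)-1) :=
    fun k => Real.Gamma_pos_of_pos (hApos k)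
  have hΓc : ∀ k : ℕ, (0:ℝ) < Real.Gamma (δ*(k:ℝ)+1) := fun k => by positivity
  set F : ℕ → ℝ → ℝ := fun k s =>
    ((-1:ℝ)^(k+1) / Real.Gamma (δ*((k:ℝ)+1)-1)) * (s ^ (δ*((k:ℝ)+1)-1-1) * (t-s) ^ ((2-δ)-1))
    with hF
  -- the positive-part integrand
  have hbeta_int : ∀ k : ℕ, IntervalIntegrable
      (fun s => s ^ (δ*((k:ℝ)+1)-1-1) * (t-s) ^ ((2-δ)-1)) volume 0 t :=
    fun k => ML_beta_integrable (hApos k) hb0 ht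
  have hbeta_val : ∀ k : ℕ, ∫ s in (0:ℝ)..t, s ^ (δ*((k:ℝ)+1)-1-1) * (t-s) ^ ((2-δ)-1)
      = Real.Gamma (δ*((k:ℝ)+1)-1) * Real.Gamma (2-δ) / Real.Gamma (δ*(k:ℝ)+1) * t ^ (δ*(k:ℝ)) := by
    intro k
    have := ML_beta (hApos k) hb0 ht
    rw [this, show δ*((k:ℝ)+1)-1 + (2-δ) = δ*(k:ℝ)+1 by ring,
      show δ*(k:ℝ)+1-1 = δ*(k:ℝ) by ring]
  have hFint : ∀ k : ℕ, Integrable (F k) (volume.restrict (Ioc 0 t)) := by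
    intro k
    apply Integrable.const_mul
    rw [← IntegrableOn]
    rw [← intervalIntegrable_iff_integrableOn_Ioc_of_le ht.le]
    exact hbeta_int k
  have hnorm_val : ∀ k : ℕ, ∫ s in Ioc (0:ℝ) t, ‖F k s‖
      = (1 / Real.Gamma (δ*((k:ℝ)+1)-1)) *
        (Real.Gamma (δ*((k:ℝ)+1)-1) * Real.Gamma (2-δ) / Real.Gamma (δ*(k:ℝ)+1) * t ^ (δ*(k:ℝ))) := by
    intro k
    have hcongr : ∀ s ∈ Ioc (0:ℝ) t, ‖F k s‖
        = (1 / Real.Gamma (δ*((k:ℝ)+1)-1)) * (s ^ (δ*((k:ℝ)+1)-1-1) * (t-s) ^ ((2-δ)-1)) := by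
      intro s hs
      have hs0 : (0:ℝ) ≤ s := hs.1.le
      have hts : (0:ℝ) ≤ t - s := by linarith [hs.2]
      rw [hF, Real.norm_eq_abs, abs_mul, abs_div, abs_pow, abs_neg, abs_one, one_pow,
        abs_of_pos (hΓa k), abs_mul, abs_of_nonneg (Real.rpow_nonneg hs0 _),
        abs_of_nonneg (Real.rpow_nonneg hts _)]
    rw [setIntegral_congr_fun measurableSet_Ioc hcongr, integral_const_mul,
      ← intervalIntegral.integral_of_le ht.le, hbeta_val k]
  have hsummable_norm : Summable (fun k : ℕ => ∫ s in Ioc (0:ℝ) t, ‖F k s‖) := by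
    apply Summable.of_norm_bounded ((ML_summable_aux hδ1 1 (t^δ) one_pos).mul_left (Real.Gamma (2-δ)))
    intro k
    rw [hnorm_val k, Real.norm_eq_abs]
    have h1 : t ^ (δ*(k:ℝ)) = (t^δ)^k := by
      rw [← Real.rpow_natCast (t^δ) k, ← Real.rpow_mul ht.le]
    have heq : (1 / Real.Gamma (δ*((k:ℝ)+1)-1)) *
        (Real.Gamma (δ*((k:ℝ)+1)-1) * Real.Gamma (2-δ) / Real.Gamma (δ*(k:ℝ)+1) * t ^ (δ*(k:ℝ)))
        = Real.Gamma (2-δ) * ((t^δ)^k / Real.Gamma (δ*(k:ℝ)+1)) := by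
      rw [h1]; field_simp [(hΓa k).ne', (hΓc k).ne']
    rw [heq, abs_of_nonneg (by positivity)]
    have h2 : (1:ℝ) ≤ ((k:ℝ)+1)^2 := by nlinarith [Nat.cast_nonneg (α := ℝ) k]
    have h3 : (0:ℝ) ≤ (t^δ)^k / Real.Gamma (δ*(k:ℝ)+1) := by positivity
    calc Real.Gamma (2-δ) * ((t^δ)^k / Real.Gamma (δ*(k:ℝ)+1))
        = Real.Gamma (2-δ) * (1 * ((t^δ)^k / Real.Gamma (δ*(k:ℝ)+1))) := by ring
      _ ≤ Real.Gamma (2-δ) * (((k:ℝ)+1)^2 * ((t^δ)^k / Real.Gamma (δ*(k:ℝ)+1))) := by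
          apply mul_le_mul_of_nonneg_left (mul_le_mul_of_nonneg_right h2 h3) hΓb.le
      _ = Real.Gamma (2-δ) * (((k:ℝ)+1)^2 * (t^δ)^k / Real.Gamma (δ*(k:ℝ)+1)) := by ring
  -- interchange
  have hinter := integral_tsum_of_summable_integral_norm hFint hsummable_norm
  -- rewrite the integral of the tsum
  have hintegrand : ∀ s ∈ Ioc (0:ℝ) t,
      (t-s)^(1-δ) * (∑' k : ℕ, (-1:ℝ)^(k+1) * s ^ (δ*(k+1)-2) / Real.Gamma (δ*(k+1)-1))
        = ∑' k : ℕ, F k s := by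
    intro s hs
    rw [← tsum_mul_left]
    apply tsum_congr
    intro k
    simp only [hF]
    push_cast
    rw [show δ*((k:ℝ)+1)-1-1 = δ*((k:ℝ)+1)-2 from by ring,
      show (2-δ-1 : ℝ) = 1-δ from by ring]
    ring
  have hmain : ∫ s in (0:ℝ)..t, (t-s)^(1-δ) *
      (∑' k : ℕ, (-1:ℝ)^(k+1) * s ^ (δ*(k+1)-2) / Real.Gamma (δ*(k+1)-1))
      = ∑' k : ℕ, ∫ s in Ioc (0:ℝ) t, F k s := by
    rw [intervalIntegral.integral_of_le ht.le, setIntegral_congr_fun measurableSet_Ioc hintegrand,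
      hinter]
  rw [hmain]
  -- evaluate each integral
  have hval : ∀ k : ℕ, ∫ s in Ioc (0:ℝ) t, F k s
      = - (Real.Gamma (2-δ) * ((-1:ℝ)^k * t ^ (δ*(k:ℝ)) / Real.Gamma (δ*(k:ℝ)+1))) := by
    intro k
    rw [hF, integral_const_mul, ← intervalIntegral.integral_of_le ht.le, hbeta_val k]
    have h5 : ((-1:ℝ)^(k+1)) = -((-1:ℝ)^k) := by rw [pow_succ]; ring
    rw [h5, neg_div, neg_mul, ML_cancel (hΓa k).ne' (hΓc k).ne']
  calc (1/Real.Gamma (2-δ)) * ∑' k : ℕ, ∫ s in Ioc (0:ℝ) t, F k s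
      = (1/Real.Gamma (2-δ)) *
          ∑' k : ℕ, -(Real.Gamma (2-δ) * ((-1:ℝ)^k * t ^ (δ*(k:ℝ)) / Real.Gamma (δ*(k:ℝ)+1))) := by
        rw [tsum_congr hval]
    _ = (1/Real.Gamma (2-δ)) *
          -(Real.Gamma (2-δ) * ∑' k : ℕ, ((-1:ℝ)^k * t ^ (δ*(k:ℝ)) / Real.Gamma (δ*(k:ℝ)+1))) := by
        rw [tsum_neg, tsum_mul_left]
    _ = - ∑' k : ℕ, (-1:ℝ)^k * t ^ (δ*k) / Real.Gamma (δ*k+1) := by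
        rw [mul_neg, ← mul_assoc, one_div_mul_cancel hΓb.ne', one_mul]

lemma ML_one_le_sq (k : ℕ) : (1:ℝ) ≤ ((k:ℝ)+1)^2 := by nlinarith [Nat.cast_nonneg (α := ℝ) k]

lemma ML_summable_z {δ : ℝ} (hδ1 : 1 < δ) (z : ℝ) :
    Summable (fun k : ℕ => z ^ k / Real.Gamma (δ * k + 1)) := by
  apply Summable.of_norm_bounded (ML_summable_aux hδ1 1 |z| one_pos)
  intro k
  have hΓ : (0:ℝ) < Real.Gamma (δ*k+1) := Real.Gamma_pos_of_pos (by positivity)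
  rw [Real.norm_eq_abs, abs_div, abs_of_pos hΓ, abs_pow]
  gcongr
  calc |z|^k = 1 * |z|^k := (one_mul _).symm
    _ ≤ ((k:ℝ)+1)^2 * |z|^k :=
      mul_le_mul_of_nonneg_right (ML_one_le_sq k) (pow_nonneg (abs_nonneg z) k)

lemma ML_repr {δ : ℝ} (hδ0 : 0 < δ) {t : ℝ} (ht : 0 ≤ t) :
    mittagLeffler δ (-(t^δ)) = ∑' k : ℕ, (-1:ℝ)^k * t^(δ*k) / Real.Gamma (δ*k+1) := by
  unfold mittagLeffler
  apply tsum_congr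
  intro k
  congr 1
  rw [neg_pow, ← Real.rpow_natCast (t^δ) k, ← Real.rpow_mul ht]

lemma ML_zero {δ : ℝ} (hδ0 : 0 < δ) : mittagLeffler δ (-((0:ℝ)^δ)) = 1 := by
  rw [Real.zero_rpow hδ0.ne', neg_zero]
  unfold mittagLeffler
  rw [tsum_eq_single 0 (by intro k hk; simp [zero_pow hk])]
  simp [Real.Gamma_one]

lemma ML_hasDerivAt_zero {δ : ℝ} (hδ1 : 1 < δ) (hδ2 : δ < 2) :
    HasDerivAt (fun τ : ℝ => mittagLeffler δ (-(τ^δ))) 0 0 := by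
  have hδ0 : (0:ℝ) < δ := by linarith
  set C : ℝ := ∑' k : ℕ, 1 / Real.Gamma (δ*((k:ℝ)+1)+1) with hC
  have hsumC : Summable (fun k : ℕ => 1 / Real.Gamma (δ*((k:ℝ)+1)+1)) := by
    apply Summable.of_norm_bounded (ML_summable_aux hδ1 (δ+1) 1 (by linarith))
    intro k
    have hΓ : (0:ℝ) < Real.Gamma (δ*((k:ℝ)+1)+1) := Real.Gamma_pos_of_pos (by positivity)
    have he : δ*((k:ℝ)+1)+1 = δ*(k:ℝ)+(δ+1) := by ring
    rw [Real.norm_eq_abs, abs_div, abs_one, abs_of_pos hΓ, he, one_pow]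
    gcongr
    simpa using ML_one_le_sq k
  have hC0 : 0 ≤ C := tsum_nonneg (fun k => by positivity)
  have hbound : ∀ τ : ℝ, |τ| ≤ 1 → |mittagLeffler δ (-(τ^δ)) - 1| ≤ C * |τ|^δ := by
    intro τ hτ
    set z : ℝ := -(τ^δ) with hz
    have hz1 : |z| ≤ |τ|^δ := by
      rw [hz, abs_neg]; exact Real.abs_rpow_le_abs_rpow τ δ
    have hz2 : |z| ≤ 1 := hz1.trans (Real.rpow_le_one (abs_nonneg τ) hτ hδ0.le)
    have hsum : Summable (fun k : ℕ => z ^ k / Real.Gamma (δ*k+1)) := ML_summable_z hδ1 z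
    have h0 : mittagLeffler δ z = 1 + ∑' k : ℕ, z^(k+1) / Real.Gamma (δ*(↑(k+1):ℝ)+1) := by
      unfold mittagLeffler
      rw [Summable.tsum_eq_zero_add hsum]
      norm_num [Real.Gamma_one]
    rw [h0, add_sub_cancel_left]
    have hterm : ∀ k : ℕ, ‖z^(k+1) / Real.Gamma (δ*(↑(k+1):ℝ)+1)‖
        ≤ |z| * (1 / Real.Gamma (δ*((k:ℝ)+1)+1)) := by
      intro k
      have hΓ : (0:ℝ) < Real.Gamma (δ*((k:ℝ)+1)+1) := Real.Gamma_pos_of_pos (by positivity)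
      have hcast : (↑(k+1):ℝ) = (k:ℝ)+1 := by push_cast; ring
      rw [Real.norm_eq_abs, abs_div, hcast, abs_of_pos hΓ, abs_pow, pow_succ]
      rw [div_le_iff₀ hΓ, mul_comm |z|]
      have : |z|^k * |z| ≤ 1 * |z| :=
        mul_le_mul_of_nonneg_right (pow_le_one₀ (abs_nonneg z) hz2) (abs_nonneg z)
      calc |z|^k * |z| ≤ 1 * |z| := this
        _ = |z| := one_mul _
        _ = |z| * (1/Real.Gamma (δ*((k:ℝ)+1)+1)) * Real.Gamma (δ*((k:ℝ)+1)+1) := by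
            field_simp
        _ = 1/Real.Gamma (δ*((k:ℝ)+1)+1) * |z| * Real.Gamma (δ*((k:ℝ)+1)+1) := by ring
    have hsum2 : Summable (fun k : ℕ => z^(k+1) / Real.Gamma (δ*(↑(k+1):ℝ)+1)) := by
      apply Summable.of_norm_bounded (hsumC.mul_left |z|) hterm
    calc |∑' k : ℕ, z^(k+1) / Real.Gamma (δ*(↑(k+1):ℝ)+1)|
        ≤ ∑' k : ℕ, ‖z^(k+1) / Real.Gamma (δ*(↑(k+1):ℝ)+1)‖ := by
          rw [← Real.norm_eq_abs]
          exact norm_tsum_le_tsum_norm hsum2.norm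
      _ ≤ ∑' k : ℕ, |z| * (1 / Real.Gamma (δ*((k:ℝ)+1)+1)) :=
          Summable.tsum_le_tsum hterm hsum2.norm (hsumC.mul_left |z|)
      _ = |z| * C := tsum_mul_left
      _ ≤ |τ|^δ * C := mul_le_mul_of_nonneg_right hz1 hC0
      _ = C * |τ|^δ := mul_comm _ _
  rw [hasDerivAt_iff_tendsto]
  apply squeeze_zero' (g := fun τ => C * |τ|^(δ-1))
    (Eventually.of_forall (fun τ => by positivity))
  · have h1 : ∀ᶠ τ : ℝ in 𝓝 0, |τ| ≤ 1 := by
      filter_upwards [Metric.ball_mem_nhds (0:ℝ) one_pos] with τ hτ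
      rw [Metric.mem_ball, Real.dist_eq, sub_zero] at hτ
      exact hτ.le
    filter_upwards [h1] with τ hτ
    rcases eq_or_ne τ 0 with rfl | hτ0
    · simp [ML_zero hδ0]
      positivity
    · have habs : (0:ℝ) < |τ| := abs_pos.mpr hτ0
      have hsplit : |τ|^(δ-1) * |τ| = |τ|^δ := by
        nth_rewrite 2 [← Real.rpow_one |τ|]
        rw [← Real.rpow_add habs]
        norm_num
      rw [sub_zero, smul_eq_mul, mul_zero, sub_zero, Real.norm_eq_abs, Real.norm_eq_abs,
        ML_zero hδ0]
      rw [inv_mul_le_iff₀ habs]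
      calc |mittagLeffler δ (-(τ^δ)) - 1| ≤ C * |τ|^δ := hbound τ hτ
        _ = |τ| * (C * |τ|^(δ-1)) := by rw [← hsplit]; ring
  · have hc : ContinuousAt (fun x : ℝ => x ^ (δ-1)) 0 :=
      Real.continuousAt_rpow_const 0 (δ-1) (Or.inr (by linarith))
    have h2 : Tendsto (fun τ : ℝ => |τ|^(δ-1)) (𝓝 0) (𝓝 ((0:ℝ)^(δ-1))) := by
      apply hc.tendsto.comp
      have := continuous_abs.tendsto (0:ℝ)
      simpa using this
    rw [Real.zero_rpow (by intro h; apply absurd h; intro h'; linarith [sub_eq_zero.mp h'] : δ-1 ≠ 0)] at h2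
    simpa using h2.const_mul C

/-- Example 1.1 (case `1 < δ < 2`): `v(x,t) = E_δ(-t^δ) sin x` solves the fractional wave
equation `D_t^δ v - v_xx = 0` on `(0,π) × (0,T]` with homogeneous Dirichlet boundary
conditions and initial conditions `v(x,0) = sin x`, `v_t(x,0) = 0`. -/
theorem mittagLeffler_solves_fractional_wave
    (δ T : ℝ) (hδ1 : 1 < δ) (hδ2 : δ < 2) (hT : 0 < T)
    (v : ℝ → ℝ → ℝ) (hv : v = fun x t => mittagLeffler δ (-(t ^ δ)) * Real.sin x) :
    (∀ x ∈ Ioo (0:ℝ) Real.pi, ∀ t ∈ Ioc (0:ℝ) T,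
      (1 / Real.Gamma (2 - δ)) *
          (∫ s in (0:ℝ)..t, (t - s) ^ (1 - δ) * deriv (deriv (fun τ : ℝ => v x τ)) s)
        - deriv (deriv (fun y : ℝ => v y t)) x = 0) ∧
    (∀ t ∈ Icc (0:ℝ) T, v 0 t = 0 ∧ v Real.pi t = 0) ∧
    (∀ x ∈ Icc (0:ℝ) Real.pi, v x 0 = Real.sin x ∧ deriv (fun τ : ℝ => v x τ) 0 = 0) := by
  subst hv
  have hδ0 : (0:ℝ) < δ := by linarith
  set F : ℝ → ℝ := fun t => mittagLeffler δ (-(t ^ δ)) with hF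
  set gS : ℝ → ℝ := fun y => ∑' k : ℕ, (-1:ℝ)^(k+1) * y ^ (δ*(k+1)-1) / Real.Gamma (δ*(k+1))
    with hgS
  set hS : ℝ → ℝ := fun y => ∑' k : ℕ, (-1:ℝ)^(k+1) * y ^ (δ*(k+1)-2) / Real.Gamma (δ*(k+1)-1)
    with hhS
  have hFf : ∀ y : ℝ, 0 < y → F y = ∑' k : ℕ, (-1:ℝ)^k * y^(δ*k) / Real.Gamma (δ*k+1) :=
    fun y hy => ML_repr hδ0 hy.le
  have hDF : ∀ y : ℝ, 0 < y → HasDerivAt F (gS y) y := by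
    intro y hy
    exact (ML_hasDerivAt_f hδ1 hδ2 hy).congr_of_eventuallyEq
      (Filter.eventuallyEq_of_mem (Ioi_mem_nhds hy) (fun z hz => hFf z hz))
  have hDG : ∀ y : ℝ, 0 < y → HasDerivAt gS (hS y) y := fun y hy => ML_hasDerivAt_g hδ1 hδ2 hy
  refine ⟨?_, ?_, ?_⟩
  · -- the PDE
    rintro x ⟨hx0, hxπ⟩ t ⟨ht0, htT⟩
    have hD1 : ∀ y : ℝ, 0 < y →
        deriv (fun τ : ℝ => F τ * Real.sin x) y = gS y * Real.sin x :=
      fun y hy => ((hDF y hy).mul_const _).deriv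
    have hD2 : ∀ s : ℝ, 0 < s →
        deriv (deriv (fun τ : ℝ => F τ * Real.sin x)) s = hS s * Real.sin x := by
      intro s hs
      have h₁ : deriv (fun τ : ℝ => F τ * Real.sin x) =ᶠ[𝓝 s] (fun y => gS y * Real.sin x) :=
        Filter.eventuallyEq_of_mem (Ioi_mem_nhds hs) (fun y hy => hD1 y hy)
      rw [h₁.deriv_eq]
      exact ((hDG s hs).mul_const _).deriv
    have hint : (∫ s in (0:ℝ)..t, (t - s) ^ (1 - δ) *
        deriv (deriv (fun τ : ℝ => F τ * Real.sin x)) s)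
        = Real.sin x * ∫ s in (0:ℝ)..t, (t - s) ^ (1 - δ) * hS s := by
      rw [intervalIntegral.integral_of_le ht0.le, intervalIntegral.integral_of_le ht0.le,
        ← integral_const_mul]
      apply setIntegral_congr_fun measurableSet_Ioc
      intro s hs
      show (t - s) ^ (1 - δ) * deriv (deriv (fun τ : ℝ => F τ * Real.sin x)) s
        = Real.sin x * ((t - s) ^ (1 - δ) * hS s)
      rw [hD2 s hs.1]
      ring
    have hfrac := ML_frac hδ1 hδ2 ht0
    have hspace : deriv (deriv (fun y : ℝ => F t * Real.sin y)) x = F t * (-Real.sin x) := by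
      have e1 : (deriv fun y : ℝ => F t * Real.sin y) = fun y => F t * Real.cos y :=
        funext fun y => ((Real.hasDerivAt_sin y).const_mul (F t)).deriv
      rw [e1]
      exact ((Real.hasDerivAt_cos x).const_mul (F t)).deriv
    show (1 / Real.Gamma (2 - δ)) *
        (∫ s in (0:ℝ)..t, (t - s) ^ (1 - δ) * deriv (deriv (fun τ : ℝ => F τ * Real.sin x)) s)
      - deriv (deriv (fun y : ℝ => F t * Real.sin y)) x = 0
    rw [hint, hspace, hFf t ht0]
    have : (1 / Real.Gamma (2 - δ)) * (Real.sin x * ∫ s in (0:ℝ)..t, (t - s) ^ (1 - δ) * hS s)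
        = Real.sin x * ((1 / Real.Gamma (2 - δ)) * ∫ s in (0:ℝ)..t, (t - s) ^ (1 - δ) * hS s) := by
      ring
    rw [this, hhS]
    simp only at hfrac ⊢
    rw [hfrac]
    ring
  · -- boundary conditions
    intro t _
    constructor <;> simp
  · -- initial conditions
    intro x _
    constructor
    · show F 0 * Real.sin x = Real.sin x
      rw [hF]
      simp only [ML_zero hδ0, one_mul]
    · show deriv (fun τ : ℝ => F τ * Real.sin x) 0 = 0
      have h := (ML_hasDerivAt_zero hδ1 hδ2).mul_const (Real.sin x)
      simpa using h.deriv
end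

section
/- Let 1 < δ < 2 and define v(x,t) := E_δ(-t^δ) sin x. Then for each fixed x ∈ (0,π), the second time derivative v_tt(x,t) = Σ_{k=1}^∞ (-1)^k t^{δk-2} sin x / Γ(δk-1) satisfies lim_{t→0⁺} t^{2-δ} v_tt(x,t) = - sin x / Γ(δ-1); in particular v_tt(x,t) blows up like t^{δ-2} as t → 0⁺. -/
set_option maxHeartbeats 1000000


open Real Filter Set Topology

noncomputable def mlS1 (δ : ℝ) (t : ℝ) : ℝ :=
  ∑' k : ℕ, (-1:ℝ)^(k+1) * t ^ (δ*((k:ℝ)+1) - 1) / Real.Gamma (δ*((k:ℝ)+1))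

noncomputable def mlS2 (δ : ℝ) (t : ℝ) : ℝ :=
  ∑' k : ℕ, (-1:ℝ)^(k+1) * t ^ (δ*((k:ℝ)+1) - 2) / Real.Gamma (δ*((k:ℝ)+1) - 1)

lemma ml_summable {δ c : ℝ} (hδ : 1 < δ) (hc : 0 < c) {r : ℝ} (hr : 0 ≤ r) :
    Summable (fun k : ℕ => r ^ k / Real.Gamma (δ * k + c)) := by
  obtain ⟨K, hK⟩ := exists_nat_ge ((2 - c) / (δ - 1))
  have hδ1 : (0:ℝ) < δ - 1 := by linarith
  rw [← summable_nat_add_iff (K + 1)]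
  have key : ∀ n : ℕ, r ^ (n + (K + 1)) / Real.Gamma (δ * (↑(n + (K + 1))) + c)
      ≤ r ^ (n + (K + 1)) / (Nat.factorial (n + (K + 1)) : ℝ) := by
    intro n
    set k := n + (K + 1) with hk
    have hk1 : (1:ℝ) ≤ (k:ℝ) := by
      have : 1 ≤ k := by omega
      exact_mod_cast this
    have h2 : 2 - c ≤ (δ - 1) * k := by
      calc 2 - c ≤ (δ - 1) * K := by
            rw [div_le_iff₀ hδ1] at hK; linarith [hK]
        _ ≤ (δ - 1) * k := by
            apply mul_le_mul_of_nonneg_left _ hδ1.le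
            have : K ≤ k := by omega
            exact_mod_cast this
    have hkk : ((k:ℝ) + 1) ≤ δ * k + c := by linarith
    have hgam : Real.Gamma ((k:ℝ) + 1) ≤ Real.Gamma (δ * k + c) := by
      rcases eq_or_lt_of_le hkk with h | h
      · rw [h]
      · exact (Real.Gamma_strictMonoOn_Ici (by simp only [mem_Ici]; linarith)
          (by simp only [mem_Ici]; linarith) h).le
    rw [Real.Gamma_nat_eq_factorial] at hgam
    exact div_le_div_of_nonneg_left (pow_nonneg hr _) (by positivity) hgam
  apply Summable.of_nonneg_of_le _ key
    ((summable_nat_add_iff (K + 1)).2 (Real.summable_pow_div_factorial r))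
  intro n
  have h0 : (0:ℝ) < δ * (↑(n + (K + 1))) + c := by positivity
  positivity

lemma hasDerivAt_tsum_on {f f' : ℕ → ℝ → ℝ} {u : ℕ → ℝ} {s : Set ℝ}
    (hs : IsOpen s) (hu : Summable u)
    (hf : ∀ k, ∀ t ∈ s, HasDerivAt (f k) (f' k t) t)
    (hf' : ∀ (k : ℕ), ∀ t ∈ s, ‖f' k t‖ ≤ u k)
    (hsum : ∀ t ∈ s, Summable (fun k => f k t))
    {t : ℝ} (ht : t ∈ s) :
    HasDerivAt (fun y => ∑' k, f k y) (∑' k, f' k t) t :=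
  hasDerivAt_of_tendstoUniformlyOn hs (tendstoUniformlyOn_tsum hu hf')
    (Eventually.of_forall fun N t hts => HasDerivAt.sum fun k _ => hf k t hts)
    (fun t hts => by simp only [Finset.sum_apply]; exact (hsum t hts).hasSum) ht

lemma ml_hasDerivAt1 {δ : ℝ} (hδ1 : 1 < δ) {t : ℝ} (ht : 0 < t) :
    HasDerivAt (fun τ : ℝ => mittagLeffler δ (-(τ ^ δ))) (mlS1 δ t) t := by
  have hδ0 : (0:ℝ) < δ := by linarith
  set f : ℕ → ℝ → ℝ := fun k y => (-(y ^ δ)) ^ k / Real.Gamma (δ * k + 1) with hf_def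
  set f' : ℕ → ℝ → ℝ :=
    fun k y => (-1:ℝ)^k * (δ * k * y ^ (δ * (k:ℝ) - 1)) / Real.Gamma (δ * k + 1) with hf'_def
  set s : Set ℝ := Ioo (t/2) (t+1) with hs_def
  have hts : t ∈ s := ⟨by linarith, by linarith⟩
  have hspos : ∀ y ∈ s, 0 < y := fun y hy => lt_trans (by linarith) hy.1
  set u : ℕ → ℝ := fun k => δ * k * ((t+1) ^ δ) ^ k / ((t/2) * Real.Gamma (δ * k + 1)) with hu_def
  -- Gamma positivity
  have hΓ : ∀ k : ℕ, 0 < Real.Gamma (δ * k + 1) := fun k =>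
    Real.Gamma_pos_of_pos (by positivity)
  -- the nice form of f on positive reals
  have hfeq : ∀ k : ℕ, ∀ y : ℝ, 0 < y →
      f k y = (-1:ℝ)^k * y ^ (δ * (k:ℝ)) / Real.Gamma (δ * k + 1) := by
    intro k y hy
    have h1 : y ^ (δ * (k:ℝ)) = (y ^ δ) ^ k := by
      rw [Real.rpow_mul hy.le, Real.rpow_natCast]
    rw [hf_def]
    simp only
    rw [h1, neg_eq_neg_one_mul, mul_pow]
  -- derivatives
  have hf : ∀ k : ℕ, ∀ y ∈ s, HasDerivAt (f k) (f' k y) y := by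
    intro k y hy
    have hy0 := hspos y hy
    have h1 : HasDerivAt (fun z : ℝ => (-1:ℝ)^k * z ^ (δ * (k:ℝ)) / Real.Gamma (δ * k + 1))
        ((-1:ℝ)^k * (δ * k * y ^ (δ * (k:ℝ) - 1)) / Real.Gamma (δ * k + 1)) y :=
      ((Real.hasDerivAt_rpow_const (p := δ * (k:ℝ)) (Or.inl hy0.ne')).const_mul
        ((-1:ℝ)^k)).div_const _
    exact h1.congr_of_eventuallyEq <| by
      filter_upwards [isOpen_Ioi.mem_nhds (mem_Ioi.2 hy0)] with z hz
      exact hfeq k z hz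
  -- bound
  have hbound : ∀ (k : ℕ), ∀ y ∈ s, ‖f' k y‖ ≤ u k := by
    intro k y hy
    have hy0 := hspos y hy
    have hnorm : ‖f' k y‖ = δ * k * y ^ (δ * (k:ℝ) - 1) / Real.Gamma (δ * k + 1) := by
      rw [hf'_def]
      simp only [Real.norm_eq_abs, abs_div, abs_mul, abs_pow, abs_neg, abs_one, one_pow, one_mul,
        abs_of_nonneg (Real.Gamma_pos_of_pos (by positivity : (0:ℝ) < δ * k + 1)).le,
        abs_of_nonneg (Real.rpow_nonneg hy0.le _), abs_of_nonneg (by positivity : (0:ℝ) ≤ δ * k)]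
    rw [hnorm, hu_def]
    simp only
    have hsub : y ^ (δ * (k:ℝ) - 1) = y ^ (δ * (k:ℝ)) / y := by
      rw [Real.rpow_sub hy0, Real.rpow_one]
    have hnum : y ^ (δ * (k:ℝ)) ≤ ((t+1) ^ δ) ^ k := by
      rw [← Real.rpow_natCast ((t+1)^δ) k, ← Real.rpow_mul (by linarith : (0:ℝ) ≤ t+1)]
      exact Real.rpow_le_rpow hy0.le (le_of_lt hy.2) (by positivity)
    have h2 : y ^ (δ * (k:ℝ) - 1) ≤ ((t+1) ^ δ) ^ k / (t/2) := by
      rw [hsub]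
      exact div_le_div₀ (by positivity) hnum (by linarith) hy.1.le
    calc δ * k * y ^ (δ * (k:ℝ) - 1) / Real.Gamma (δ * k + 1)
        ≤ δ * k * (((t+1) ^ δ) ^ k / (t/2)) / Real.Gamma (δ * k + 1) := by
          apply div_le_div₀ (by positivity) _ (hΓ k) le_rfl
          exact mul_le_mul_of_nonneg_left h2 (by positivity)
      _ = δ * ↑k * ((t+1) ^ δ) ^ k / (t / 2 * Real.Gamma (δ * ↑k + 1)) := by
          field_simp
  -- summability of u
  have hu : Summable u := by
    have hb : (0:ℝ) ≤ (t+1)^δ := Real.rpow_nonneg (by linarith) _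
    apply Summable.of_nonneg_of_le
      (fun k => by
        have := (hΓ k).le
        positivity)
      (fun k => ?_)
      (((ml_summable hδ1 one_pos (r := 2 * ((t+1)^δ)) (by positivity)).mul_left (δ / (t/2))))
    rw [hu_def]
    simp only
    have hk2 : (k:ℝ) ≤ 2 ^ k := by
      exact_mod_cast (Nat.lt_two_pow_self (n := k)).le
    have : δ * k * ((t+1) ^ δ) ^ k ≤ δ * ((2 * ((t+1)^δ)) ^ k) := by
      rw [mul_pow]
      calc δ * k * ((t+1) ^ δ) ^ k ≤ δ * 2^k * ((t+1) ^ δ) ^ k := by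
            apply mul_le_mul_of_nonneg_right _ (by positivity)
            exact mul_le_mul_of_nonneg_left hk2 hδ0.le
        _ = δ * (2^k * ((t+1) ^ δ) ^ k) := by ring
    rw [div_mul_div_comm]
    exact div_le_div₀ (by positivity) this (by positivity) le_rfl
  -- summability of f at each point
  have hsum : ∀ y ∈ s, Summable (fun k => f k y) := by
    intro y hy
    have hy0 := hspos y hy
    apply Summable.of_norm
    have heq : (fun k : ℕ => ‖f k y‖) = fun k : ℕ => (y^δ)^k / Real.Gamma (δ * k + 1) := by
      funext k
      rw [hf_def]
      simp only [Real.norm_eq_abs, abs_div, abs_pow, abs_neg,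
        abs_of_nonneg (Real.rpow_nonneg hy0.le δ), abs_of_nonneg (hΓ k).le]
    rw [heq]
    exact ml_summable hδ1 one_pos (Real.rpow_nonneg hy0.le δ)
  have hmain := hasDerivAt_tsum_on isOpen_Ioo hu hf hbound hsum hts
  have hfun : (fun y => ∑' k, f k y) = fun τ : ℝ => mittagLeffler δ (-(τ ^ δ)) := rfl
  rw [hfun] at hmain
  convert hmain using 1
  have hsf' : Summable (fun k => f' k t) :=
    Summable.of_norm_bounded hu (fun k => hbound k t hts)
  rw [Summable.tsum_eq_zero_add hsf']
  have h0 : f' 0 t = 0 := by rw [hf'_def]; norm_num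
  rw [h0, zero_add]
  simp only [mlS1]
  apply tsum_congr
  intro k
  have hpos : (0:ℝ) < δ * ((k:ℝ)+1) := by positivity
  have hΓne : Real.Gamma (δ * ((k:ℝ)+1)) ≠ 0 := (Real.Gamma_pos_of_pos hpos).ne'
  rw [hf'_def]
  simp only
  push_cast
  rw [Real.Gamma_add_one hpos.ne']
  field_simp

lemma ml_hasDerivAt2 {δ : ℝ} (hδ1 : 1 < δ) (hδ2 : δ < 2) {t : ℝ} (ht : 0 < t) :
    HasDerivAt (mlS1 δ) (mlS2 δ t) t := by
  have hδ0 : (0:ℝ) < δ := by linarith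
  set f : ℕ → ℝ → ℝ :=
    fun k y => (-1:ℝ)^(k+1) * y ^ (δ*((k:ℝ)+1) - 1) / Real.Gamma (δ*((k:ℝ)+1)) with hf_def
  set f' : ℕ → ℝ → ℝ := fun k y =>
    (-1:ℝ)^(k+1) * ((δ*((k:ℝ)+1) - 1) * y ^ (δ*((k:ℝ)+1) - 1 - 1)) / Real.Gamma (δ*((k:ℝ)+1))
    with hf'_def
  set s : Set ℝ := Ioo (t/2) (t+1) with hs_def
  have hts : t ∈ s := ⟨by linarith, by linarith⟩
  have hspos : ∀ y ∈ s, 0 < y := fun y hy => lt_trans (by linarith) hy.1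
  have hargpos : ∀ k : ℕ, (0:ℝ) < δ * ((k:ℝ)+1) := fun k => by positivity
  have hΓ : ∀ k : ℕ, 0 < Real.Gamma (δ * ((k:ℝ)+1)) := fun k =>
    Real.Gamma_pos_of_pos (hargpos k)
  have hΓ' : ∀ k : ℕ, 0 < Real.Gamma (δ * (k:ℝ) + δ) := fun k =>
    Real.Gamma_pos_of_pos (by positivity)
  have hcoe : ∀ k : ℕ, δ * ((k:ℝ)+1) = δ * (k:ℝ) + δ := fun k => by ring
  have hcm1 : ∀ k : ℕ, (0:ℝ) < δ*((k:ℝ)+1) - 1 := by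
    intro k
    have : (1:ℝ) ≤ (k:ℝ) + 1 := by linarith [Nat.cast_nonneg (α := ℝ) k]
    nlinarith
  set u : ℕ → ℝ := fun k =>
    2 * (t/2) ^ (δ-2) * ((2 * (t+1) ^ δ) ^ k / Real.Gamma (δ * (k:ℝ) + δ)) with hu_def
  have hf : ∀ k : ℕ, ∀ y ∈ s, HasDerivAt (f k) (f' k y) y := by
    intro k y hy
    exact ((Real.hasDerivAt_rpow_const (p := δ*((k:ℝ)+1) - 1)
      (Or.inl (hspos y hy).ne')).const_mul ((-1:ℝ)^(k+1))).div_const _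
  have hbound : ∀ (k : ℕ), ∀ y ∈ s, ‖f' k y‖ ≤ u k := by
    intro k y hy
    have hy0 := hspos y hy
    have hnorm : ‖f' k y‖
        = (δ*((k:ℝ)+1) - 1) * y ^ (δ*((k:ℝ)+1) - 1 - 1) / Real.Gamma (δ*((k:ℝ)+1)) := by
      rw [hf'_def]
      simp only [Real.norm_eq_abs, abs_div, abs_mul, abs_pow, abs_neg, abs_one, one_pow, one_mul,
        abs_of_nonneg (hΓ k).le, abs_of_nonneg (Real.rpow_nonneg hy0.le _),
        abs_of_nonneg (hcm1 k).le]
    rw [hnorm, hu_def, hcoe k]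
    simp only
    rw [show δ*(k:ℝ) + δ - 1 - 1 = δ*(k:ℝ) + (δ - 2) from by ring, Real.rpow_add hy0]
    have hB : y ^ (δ * (k:ℝ)) ≤ ((t+1) ^ δ) ^ k := by
      rw [← Real.rpow_natCast ((t+1)^δ) k, ← Real.rpow_mul (by linarith : (0:ℝ) ≤ t+1)]
      exact Real.rpow_le_rpow hy0.le (le_of_lt hy.2) (by positivity)
    have hC : y ^ (δ - 2) ≤ (t/2) ^ (δ - 2) :=
      Real.rpow_le_rpow_of_nonpos (by linarith) hy.1.le (by linarith)
    have hA : δ*(k:ℝ) + δ - 1 ≤ 2 * 2 ^ k := by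
      have hk2 : (k:ℝ) + 1 ≤ 2 ^ k := by exact_mod_cast Nat.lt_two_pow_self (n := k)
      nlinarith [pow_pos (zero_lt_two (α := ℝ)) k]
    rw [← mul_div_assoc]
    apply div_le_div₀ (by positivity) ?_ (hΓ' k) le_rfl
    have hcm1' : (0:ℝ) ≤ δ*(k:ℝ) + δ - 1 := by rw [← hcoe k]; exact (hcm1 k).le
    calc (δ*(k:ℝ) + δ - 1) * (y ^ (δ*(k:ℝ)) * y ^ (δ-2))
        ≤ (2 * 2 ^ k) * (((t+1) ^ δ) ^ k * (t/2) ^ (δ-2)) := by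
          apply mul_le_mul hA _ (by positivity) (by positivity)
          exact mul_le_mul hB hC (Real.rpow_nonneg hy0.le _)
            (pow_nonneg (Real.rpow_nonneg (by linarith) _) _)
      _ = 2 * (t/2) ^ (δ-2) * (2 * (t+1) ^ δ) ^ k := by rw [mul_pow]; ring
  have hu : Summable u :=
    (ml_summable hδ1 hδ0 (r := 2 * ((t+1)^δ))
      (by positivity)).mul_left (2 * (t/2) ^ (δ-2))
  have hsum : ∀ y ∈ s, Summable (fun k => f k y) := by
    intro y hy
    have hy0 := hspos y hy
    apply Summable.of_norm
    have heq : (fun k : ℕ => ‖f k y‖)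
        = fun k : ℕ => y ^ (δ-1) * ((y^δ)^k / Real.Gamma (δ * (k:ℝ) + δ)) := by
      funext k
      rw [hf_def]
      simp only [Real.norm_eq_abs, abs_div, abs_mul, abs_pow, abs_neg, abs_one, one_pow, one_mul,
        abs_of_nonneg (hΓ k).le, abs_of_nonneg (Real.rpow_nonneg hy0.le _)]
      rw [show δ*((k:ℝ)+1) - 1 = (δ - 1) + δ * (k:ℝ) by ring, Real.rpow_add hy0,
        show y ^ (δ * (k:ℝ)) = (y^δ)^k by
          rw [← Real.rpow_natCast (y^δ) k, ← Real.rpow_mul hy0.le],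
        hcoe k, mul_div_assoc]
    rw [heq]
    exact (ml_summable hδ1 hδ0 (Real.rpow_nonneg hy0.le δ)).mul_left _
  have hmain := hasDerivAt_tsum_on isOpen_Ioo hu hf hbound hsum hts
  have hfun : (fun y => ∑' k, f k y) = mlS1 δ := rfl
  rw [hfun] at hmain
  convert hmain using 1
  simp only [mlS2]
  apply tsum_congr
  intro k
  have hne : δ*((k:ℝ)+1) - 1 ≠ 0 := (hcm1 k).ne'
  have hΓm : Real.Gamma (δ*((k:ℝ)+1) - 1) ≠ 0 :=
    (Real.Gamma_pos_of_pos (hcm1 k)).ne'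
  rw [hf'_def]
  simp only
  rw [show δ*((k:ℝ)+1) = (δ*((k:ℝ)+1) - 1) + 1 by ring, Real.Gamma_add_one hne,
    show δ*((k:ℝ)+1) - 1 + 1 - 1 - 1 = δ*((k:ℝ)+1) - 2 by ring]
  field_simp
  have hΓm' : Real.Gamma (-1 + δ + δ*(k:ℝ)) ≠ 0 := by convert hΓm using 2; ring
  ring_nf
  simp only [mul_inv_cancel_right₀ hΓm']

lemma ml_tendsto {δ : ℝ} (hδ1 : 1 < δ) (hδ2 : δ < 2) :
    Tendsto (fun t : ℝ => t ^ (2-δ) * mlS2 δ t) (𝓝[>] (0:ℝ))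
      (𝓝 (-1 / Real.Gamma (δ-1))) := by
  have hδ0 : (0:ℝ) < δ := by linarith
  have hδm1 : (0:ℝ) < δ - 1 := by linarith
  have h2δ : (0:ℝ) < 2*δ - 1 := by linarith
  set C : ℝ := ∑' k : ℕ, (1:ℝ)^k / Real.Gamma (δ*(k:ℝ) + (2*δ-1)) with hC_def
  have hCsum : Summable (fun k : ℕ => (1:ℝ)^k / Real.Gamma (δ*(k:ℝ) + (2*δ-1))) :=
    ml_summable hδ1 h2δ zero_le_one
  have key : ∀ t : ℝ, 0 < t → t ≤ 1 →
      ‖t ^ (2-δ) * mlS2 δ t - (-1 / Real.Gamma (δ-1))‖ ≤ C * t ^ δ := by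
    intro t ht ht1
    set r : ℝ := t ^ δ with hr_def
    have hr0 : 0 < r := Real.rpow_pos_of_pos ht δ
    have hr1 : r ≤ 1 := Real.rpow_le_one ht.le ht1 hδ0.le
    set g : ℕ → ℝ := fun k => (-1:ℝ)^(k+1) * r^k / Real.Gamma (δ*(k:ℝ) + (δ-1)) with hg_def
    have hΓ : ∀ k : ℕ, 0 < Real.Gamma (δ*(k:ℝ) + (δ-1)) := fun k =>
      Real.Gamma_pos_of_pos (by positivity)
    have hΓ' : ∀ k : ℕ, 0 < Real.Gamma (δ*(k:ℝ) + (2*δ-1)) := fun k =>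
      Real.Gamma_pos_of_pos (by positivity)
    have hgnorm : ∀ k : ℕ, ‖g k‖ = r^k / Real.Gamma (δ*(k:ℝ) + (δ-1)) := by
      intro k
      rw [hg_def]
      simp only [Real.norm_eq_abs, abs_div, abs_mul, abs_pow, abs_neg, abs_one, one_pow, one_mul,
        abs_of_nonneg (hΓ k).le, abs_of_nonneg hr0.le]
    have hgsum : Summable g := by
      apply Summable.of_norm
      simp only [hgnorm]
      exact ml_summable hδ1 hδm1 hr0.le
    -- step 1 : rewrite the product as the series g
    have hstep1 : t ^ (2-δ) * mlS2 δ t = ∑' k, g k := by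
      rw [mlS2, ← tsum_mul_left]
      apply tsum_congr
      intro k
      have hexp : t^(2-δ) * t ^ (δ*((k:ℝ)+1) - 2) = r ^ k := by
        rw [← Real.rpow_add ht, show (2-δ) + (δ*((k:ℝ)+1) - 2) = δ*(k:ℝ) by ring,
          hr_def, ← Real.rpow_natCast (t ^ δ) k, ← Real.rpow_mul ht.le]
      rw [hg_def]
      simp only
      rw [show δ*((k:ℝ)+1) - 1 = δ*(k:ℝ) + (δ-1) by ring, ← hexp]
      ring
    -- step 2 : split off the first term
    have hg0 : g 0 = -1 / Real.Gamma (δ-1) := by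
      rw [hg_def]
      norm_num
    have htail : ‖∑' k, g (k+1)‖ ≤ C * r := by
      have hnormsum : Summable (fun k => ‖g (k+1)‖) :=
        (summable_nat_add_iff 1).2 hgsum.norm
      calc ‖∑' k, g (k+1)‖ ≤ ∑' k, ‖g (k+1)‖ := norm_tsum_le_tsum_norm hnormsum
        _ ≤ ∑' k : ℕ, r * ((1:ℝ)^k / Real.Gamma (δ*(k:ℝ) + (2*δ-1))) := by
            apply Summable.tsum_le_tsum _ hnormsum (hCsum.mul_left r)
            intro k
            rw [hgnorm (k+1)]
            have harg : δ*(↑(k+1):ℝ) + (δ-1) = δ*(k:ℝ) + (2*δ-1) := by push_cast; ring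
            rw [harg]
            have hpow : r^(k+1) ≤ r * 1^k := by
              rw [pow_succ, one_pow, mul_one]
              calc r ^ k * r ≤ 1 * r := by
                    apply mul_le_mul_of_nonneg_right _ hr0.le
                    exact pow_le_one₀ hr0.le hr1
                _ = r := one_mul r
            calc r^(k+1) / Real.Gamma (δ*(k:ℝ) + (2*δ-1))
                ≤ (r * 1^k) / Real.Gamma (δ*(k:ℝ) + (2*δ-1)) :=
                  div_le_div₀ (by positivity) hpow (hΓ' k) le_rfl
              _ = r * ((1:ℝ)^k / Real.Gamma (δ*(k:ℝ) + (2*δ-1))) := by rw [mul_div_assoc]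
        _ = r * C := by rw [tsum_mul_left]
        _ = C * r := mul_comm r C
    rw [hstep1, Summable.tsum_eq_zero_add hgsum, hg0]
    simpa using htail
  -- conclude
  rw [← tendsto_sub_nhds_zero_iff]
  have hev : ∀ᶠ t in 𝓝[>] (0:ℝ),
      ‖t ^ (2-δ) * mlS2 δ t - (-1 / Real.Gamma (δ-1))‖ ≤ C * t ^ δ := by
    filter_upwards [Ioo_mem_nhdsGT_of_mem (Set.mem_Ico.2 ⟨le_refl (0:ℝ), zero_lt_one⟩)]
      with t htm
    exact key t htm.1 htm.2.le
  have h1 : Tendsto (fun t : ℝ => t ^ δ) (𝓝[>] (0:ℝ)) (𝓝 0) := by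
    have h2 := (Real.continuousAt_rpow_const 0 δ (Or.inr hδ0.le)).tendsto
    rw [Real.zero_rpow hδ0.ne'] at h2
    exact h2.mono_left nhdsWithin_le_nhds
  exact squeeze_zero_norm' hev (by simpa using h1.const_mul C)



/-- For `1 < δ < 2`, `v(x,t) = E_δ(-t^δ) sin x` and fixed `x ∈ (0,π)`: the second time
derivative equals the series `Σ_{k=1}^∞ (-1)^k t^(δk-2) sin x / Γ(δk-1)` (reindexed via
`k+1`), and `t^(2-δ) v_tt(x,t) → -sin x / Γ(δ-1)` as `t → 0⁺`; i.e. `v_tt` blows up like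
`t^(δ-2)`. -/
theorem second_time_deriv_blowup_fractional_wave
    (δ : ℝ) (hδ1 : 1 < δ) (hδ2 : δ < 2) (x : ℝ) (hx : x ∈ Ioo (0:ℝ) Real.pi) :
    (∀ t : ℝ, 0 < t →
      deriv (deriv (fun τ : ℝ => mittagLeffler δ (-(τ ^ δ)) * Real.sin x)) t
        = ∑' k : ℕ, (-1 : ℝ) ^ (k + 1) * t ^ (δ * ((k : ℝ) + 1) - 2) * Real.sin x
            / Real.Gamma (δ * ((k : ℝ) + 1) - 1)) ∧
    Tendsto (fun t : ℝ =>
        t ^ (2 - δ) * deriv (deriv (fun τ : ℝ => mittagLeffler δ (-(τ ^ δ)) * Real.sin x)) t)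
      (𝓝[>] 0) (𝓝 (-Real.sin x / Real.Gamma (δ - 1))) := by
  have hD : ∀ t : ℝ, 0 < t →
      deriv (deriv (fun τ : ℝ => mittagLeffler δ (-(τ ^ δ)) * Real.sin x)) t
        = mlS2 δ t * Real.sin x := by
    intro t ht
    rw [deriv_mul_const_field' (Real.sin x), deriv_mul_const_field' (Real.sin x)]
    beta_reduce
    congr 1
    have hev : deriv (fun τ : ℝ => mittagLeffler δ (-(τ ^ δ))) =ᶠ[𝓝 t] mlS1 δ := by
      filter_upwards [isOpen_Ioi.mem_nhds (mem_Ioi.2 ht)] with y hy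
      exact (ml_hasDerivAt1 hδ1 hy).deriv
    rw [hev.deriv_eq]
    exact (ml_hasDerivAt2 hδ1 hδ2 ht).deriv
  constructor
  · intro t ht
    rw [hD t ht, mlS2, ← tsum_mul_right]
    exact tsum_congr fun k => by ring
  · have hcongr : (fun t : ℝ =>
        t ^ (2 - δ) * deriv (deriv (fun τ : ℝ => mittagLeffler δ (-(τ ^ δ)) * Real.sin x)) t)
        =ᶠ[𝓝[>] (0:ℝ)] fun t : ℝ => (t ^ (2 - δ) * mlS2 δ t) * Real.sin x := by
      filter_upwards [self_mem_nhdsWithin] with t ht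
      rw [hD t ht]; ring
    rw [tendsto_congr' hcongr]
    have h := (ml_tendsto hδ1 hδ2).mul_const (Real.sin x)
    convert h using 2
    ring
end

section
/- Let Ω ⊆ ℝⁿ be a bounded domain, T > 0, Q := Ω × (0,T], Q̄ := closure(Ω) × [0,T], and 0 < δ < 1. Let p_{ij}, q_i, r, f (1 ≤ i,j ≤ n) be continuous real-valued functions on Q̄, and suppose u ∈ C^{2,1}(Q̄), i.e. u is continuous on Q̄ and the derivatives ∂u/∂x_i, ∂²u/∂x_i∂x_j (1 ≤ i,j ≤ n) and ∂u/∂t all exist on the interior and extend continuously to Q̄. If u satisfies D_t^δ u - Σ_{i,j} p_{ij} ∂²u/∂x_i∂x_j + Σ_i q_i ∂u/∂x_i + r u = f at every point of Q, then the initial value φ_0(x) := u(x,0) satisfies L_0 φ_0(x) = f(x,0) for every x ∈ Ω, where L_0 w(x) := -Σ_{i,j} p_{ij}(x,0) ∂²w/∂x_i∂x_j(x) + Σ_i q_i(x,0) ∂w/∂x_i(x) + r(x,0) w(x). -/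
open Real Filter Set Topology Bornology

set_option maxHeartbeats 1000000 in
/-- Theorem 2.3 (case `0 < δ < 1`): let `Ω ⊆ ℝⁿ` be a bounded domain, `T > 0`,
`Q = Ω × (0,T]`, `Q̄ = closure Ω × [0,T]`. Suppose the coefficients `p i j`, `q i`, `r` and
the right-hand side `f` are continuous on `Q̄`, and `u ∈ C^{2,1}(Q̄)`: `u` is continuous on
`Q̄`, its spatial partial derivatives `ux i = ∂u/∂x_i`, `uxx i j = ∂²u/∂x_i∂x_j` exist for
`x ∈ Ω`, `t ∈ [0,T]` and are continuous on `Q̄`, and its time derivative `ut = ∂u/∂t` exists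
on the interior and extends continuously to `Q̄`. If `u` satisfies
`D_t^δ u - Σ_{i,j} p_{ij} ∂²u/∂x_i∂x_j + Σ_i q_i ∂u/∂x_i + r u = f` at every point of `Q`,
then the initial value `φ₀ = u(·,0)` satisfies `L₀ φ₀(x) = f(x,0)` for every `x ∈ Ω`. -/
theorem initial_value_satisfies_elliptic_equation
    (n : ℕ) (Ω : Set (Fin n → ℝ)) (hΩopen : IsOpen Ω) (hΩconn : IsConnected Ω)
    (hΩbdd : IsBounded Ω) (T δ : ℝ) (hT : 0 < T) (hδ0 : 0 < δ) (hδ1 : δ < 1)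
    (p : Fin n → Fin n → (Fin n → ℝ) → ℝ → ℝ) (q : Fin n → (Fin n → ℝ) → ℝ → ℝ)
    (r f : (Fin n → ℝ) → ℝ → ℝ)
    (hp : ∀ i j, ContinuousOn (fun z : (Fin n → ℝ) × ℝ => p i j z.1 z.2) (closure Ω ×ˢ Icc 0 T))
    (hq : ∀ i, ContinuousOn (fun z : (Fin n → ℝ) × ℝ => q i z.1 z.2) (closure Ω ×ˢ Icc 0 T))
    (hr : ContinuousOn (fun z : (Fin n → ℝ) × ℝ => r z.1 z.2) (closure Ω ×ˢ Icc 0 T))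
    (hf : ContinuousOn (fun z : (Fin n → ℝ) × ℝ => f z.1 z.2) (closure Ω ×ˢ Icc 0 T))
    (u ut : (Fin n → ℝ) → ℝ → ℝ)
    (ux : Fin n → (Fin n → ℝ) → ℝ → ℝ) (uxx : Fin n → Fin n → (Fin n → ℝ) → ℝ → ℝ)
    (hu_cont : ContinuousOn (fun z : (Fin n → ℝ) × ℝ => u z.1 z.2) (closure Ω ×ˢ Icc 0 T))
    (hux_deriv : ∀ i, ∀ x ∈ Ω, ∀ t ∈ Icc (0:ℝ) T,
      HasLineDerivAt ℝ (fun y => u y t) (ux i x t) x (Pi.single i 1))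
    (huxx_deriv : ∀ i j, ∀ x ∈ Ω, ∀ t ∈ Icc (0:ℝ) T,
      HasLineDerivAt ℝ (fun y => ux j y t) (uxx i j x t) x (Pi.single i 1))
    (hut_deriv : ∀ x ∈ Ω, ∀ t ∈ Ioc (0:ℝ) T, HasDerivAt (u x) (ut x t) t)
    (hux_cont : ∀ i, ContinuousOn (fun z : (Fin n → ℝ) × ℝ => ux i z.1 z.2)
      (closure Ω ×ˢ Icc 0 T))
    (huxx_cont : ∀ i j, ContinuousOn (fun z : (Fin n → ℝ) × ℝ => uxx i j z.1 z.2)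
      (closure Ω ×ˢ Icc 0 T))
    (hut_cont : ContinuousOn (fun z : (Fin n → ℝ) × ℝ => ut z.1 z.2) (closure Ω ×ˢ Icc 0 T))
    (hPDE : ∀ x ∈ Ω, ∀ t ∈ Ioc (0:ℝ) T,
      (1 / Real.Gamma (1 - δ)) * (∫ s in (0:ℝ)..t, (t - s) ^ (-δ) * ut x s)
        - (∑ i, ∑ j, p i j x t * uxx i j x t)
        + (∑ i, q i x t * ux i x t) + r x t * u x t = f x t) :
    ∀ x ∈ Ω,
      -(∑ i, ∑ j, p i j x 0 * uxx i j x 0)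
        + (∑ i, q i x 0 * ux i x 0) + r x 0 * u x 0 = f x 0 := by

  intro x hx
  have hxc : x ∈ closure Ω := subset_closure hx
  have hFI : 𝓝[>] (0:ℝ) = 𝓝[Ioc (0:ℝ) T] 0 := (nhdsWithin_Ioc_eq_nhdsGT hT).symm
  have hmemF : Ioc (0:ℝ) T ∈ 𝓝[>] (0:ℝ) := by rw [hFI]; exact self_mem_nhdsWithin
  -- generic continuity-along-the-time-axis helper
  have key : ∀ g : (Fin n → ℝ) → ℝ → ℝ,
      ContinuousOn (fun z : (Fin n → ℝ) × ℝ => g z.1 z.2) (closure Ω ×ˢ Icc 0 T) →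
      Tendsto (fun t => g x t) (𝓝[>] (0:ℝ)) (𝓝 (g x 0)) := by
    intro g hg
    have hcurve : ContinuousOn (fun t : ℝ => ((x : Fin n → ℝ), t)) (Icc 0 T) :=
      (continuous_const.prodMk continuous_id).continuousOn
    have hmaps : MapsTo (fun t : ℝ => ((x : Fin n → ℝ), t)) (Icc 0 T)
        (closure Ω ×ˢ Icc 0 T) := fun t ht => ⟨hxc, ht⟩
    have h1 : ContinuousOn (fun t => g x t) (Icc 0 T) := hg.comp hcurve hmaps
    have h2 : Tendsto (fun t => g x t) (𝓝[Icc 0 T] 0) (𝓝 (g x 0)) :=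
      h1 0 ⟨le_refl 0, hT.le⟩
    refine h2.mono_left ?_
    rw [hFI]
    exact nhdsWithin_mono _ Ioc_subset_Icc_self
  -- bound on ut x on [0,T]
  have hutc : ContinuousOn (fun t => ut x t) (Icc 0 T) :=
    hut_cont.comp ((continuous_const.prodMk continuous_id).continuousOn)
      (fun t ht => ⟨hxc, ht⟩)
  obtain ⟨M, hM⟩ := isCompact_Icc.exists_bound_of_continuousOn hutc
  have hMnonneg : 0 ≤ M := le_trans (norm_nonneg _) (hM 0 ⟨le_rfl, hT.le⟩)
  have h1δ : (0:ℝ) < 1 - δ := by linarith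
  -- the fractional-derivative integral tends to 0
  have hfrac : Tendsto (fun t => ∫ s in (0:ℝ)..t, (t - s) ^ (-δ) * ut x s)
      (𝓝[>] (0:ℝ)) (𝓝 0) := by
    have hbound : ∀ᶠ t in 𝓝[>] (0:ℝ),
        ‖∫ s in (0:ℝ)..t, (t - s) ^ (-δ) * ut x s‖ ≤ M * (t ^ (1-δ) / (1-δ)) := by
      filter_upwards [hmemF] with t ht
      have htpos : (0:ℝ) < t := ht.1
      have hδ' : (-1:ℝ) < -δ := by linarith
      have hint0 : IntervalIntegrable (fun s : ℝ => s ^ (-δ)) MeasureTheory.volume 0 t :=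
        intervalIntegral.intervalIntegrable_rpow' hδ'
      have hint1 : IntervalIntegrable (fun s : ℝ => (t - s) ^ (-δ)) MeasureTheory.volume 0 t := by
        have := (hint0.comp_sub_left t).symm
        simpa using this
      have hint : IntervalIntegrable (fun s : ℝ => M * (t - s) ^ (-δ)) MeasureTheory.volume 0 t :=
        hint1.const_mul M
      have hae : ∀ᵐ s ∂(MeasureTheory.volume.restrict (Set.uIoc (0:ℝ) t)),
          ‖(t - s) ^ (-δ) * ut x s‖ ≤ M * (t - s) ^ (-δ) := by
        refine MeasureTheory.ae_restrict_of_forall_mem measurableSet_uIoc ?_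
        intro s hs
        rw [Set.uIoc_of_le htpos.le] at hs
        have hts : 0 ≤ t - s := by linarith [hs.2]
        have hrp : 0 ≤ (t - s) ^ (-δ) := Real.rpow_nonneg hts _
        have hsmem : s ∈ Icc (0:ℝ) T := ⟨hs.1.le, hs.2.trans ht.2⟩
        calc ‖(t - s) ^ (-δ) * ut x s‖ = (t - s) ^ (-δ) * ‖ut x s‖ := by
              rw [norm_mul, Real.norm_eq_abs, abs_of_nonneg hrp]
          _ ≤ (t - s) ^ (-δ) * M := by
              exact mul_le_mul_of_nonneg_left (hM s hsmem) hrp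
          _ = M * (t - s) ^ (-δ) := mul_comm _ _
      have hle := intervalIntegral.norm_integral_le_of_norm_le htpos.le
        ((MeasureTheory.ae_restrict_iff' (s := Ioc (0:ℝ) t) measurableSet_Ioc).1
          (by rwa [Set.uIoc_of_le htpos.le] at hae)) hint
      have hval : (∫ s in (0:ℝ)..t, M * (t - s) ^ (-δ)) = M * (t ^ (1-δ) / (1-δ)) := by
        rw [intervalIntegral.integral_const_mul]
        have h2 : (∫ s in (0:ℝ)..t, (t - s) ^ (-δ))
            = ∫ s in (0:ℝ)..t, s ^ (-δ) := by
          have := intervalIntegral.integral_comp_sub_left (a := (0:ℝ)) (b := t)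
            (fun s : ℝ => s ^ (-δ)) t
          simpa using this
        rw [h2, integral_rpow (Or.inl hδ')]
        rw [Real.zero_rpow (by linarith : -δ + 1 ≠ 0)]
        ring_nf
      rw [hval] at hle
      refine hle.trans (le_of_eq ?_)
      rfl
    have hg : Tendsto (fun t : ℝ => M * (t ^ (1-δ) / (1-δ))) (𝓝[>] (0:ℝ)) (𝓝 0) := by
      have h0 : Tendsto (fun t : ℝ => t ^ (1-δ)) (𝓝 (0:ℝ)) (𝓝 ((0:ℝ) ^ (1-δ))) :=
        (Real.continuousAt_rpow_const 0 (1-δ) (Or.inr h1δ.le)).tendsto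
      rw [Real.zero_rpow h1δ.ne'] at h0
      have h1 : Tendsto (fun t : ℝ => t ^ (1-δ)) (𝓝[>] (0:ℝ)) (𝓝 0) :=
        h0.mono_left nhdsWithin_le_nhds
      have := (h1.div_const (1-δ)).const_mul M
      simpa using this
    exact squeeze_zero_norm' hbound hg
  -- limit of the PDE left-hand side
  have hP : Tendsto (fun t =>
      (1 / Real.Gamma (1 - δ)) * (∫ s in (0:ℝ)..t, (t - s) ^ (-δ) * ut x s)
        - (∑ i, ∑ j, p i j x t * uxx i j x t)
        + (∑ i, q i x t * ux i x t) + r x t * u x t) (𝓝[>] (0:ℝ))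
      (𝓝 ((1 / Real.Gamma (1 - δ)) * 0
        - (∑ i, ∑ j, p i j x 0 * uxx i j x 0)
        + (∑ i, q i x 0 * ux i x 0) + r x 0 * u x 0)) := by
    refine Tendsto.add (Tendsto.add (Tendsto.sub (hfrac.const_mul _) ?_) ?_) ?_
    · exact tendsto_finset_sum _ fun i _ => tendsto_finset_sum _ fun j _ =>
        ((key _ (hp i j)).mul (key _ (huxx_cont i j)))
    · exact tendsto_finset_sum _ fun i _ => (key _ (hq i)).mul (key _ (hux_cont i))
    · exact (key _ hr).mul (key _ hu_cont)
  have heq : (fun t =>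
      (1 / Real.Gamma (1 - δ)) * (∫ s in (0:ℝ)..t, (t - s) ^ (-δ) * ut x s)
        - (∑ i, ∑ j, p i j x t * uxx i j x t)
        + (∑ i, q i x t * ux i x t) + r x t * u x t)
      =ᶠ[𝓝[>] (0:ℝ)] (fun t => f x t) := by
    filter_upwards [hmemF] with t ht
    exact hPDE x hx t ht
  have hRf : Tendsto (fun t => f x t) (𝓝[>] (0:ℝ)) (𝓝 (f x 0)) := key _ hf
  have hfin := tendsto_nhds_unique (hP.congr' heq) hRf
  rw [mul_zero, zero_sub] at hfin
  exact hfin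
end

section
/- Let Ω ⊆ ℝⁿ be a bounded domain, T > 0, Q := Ω × (0,T], Q̄ := closure(Ω) × [0,T], and 1 < δ < 2. Let p_{ij}, q_i, r, f (1 ≤ i,j ≤ n) be continuous real-valued functions on Q̄, and suppose u ∈ C^{2,2}(Q̄), i.e. u is continuous on Q̄ and the derivatives ∂u/∂x_i, ∂²u/∂x_i∂x_j (1 ≤ i,j ≤ n), ∂u/∂t and ∂²u/∂t² all exist and extend continuously to Q̄. If u satisfies D_t^δ u - Σ_{i,j} p_{ij} ∂²u/∂x_i∂x_j + Σ_i q_i ∂u/∂x_i + r u = f at every point of Q, then φ_0(x) := u(x,0) satisfies L_0 φ_0(x) = f(x,0) for every x ∈ Ω, where L_0 w(x) := -Σ_{i,j} p_{ij}(x,0) ∂²w/∂x_i∂x_j(x) + Σ_i q_i(x,0) ∂w/∂x_i(x) + r(x,0) w(x). -/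
open Real Filter Set Topology Bornology

/-- Theorem 2.3 (case `1 < δ < 2`): let `Ω ⊆ ℝⁿ` be a bounded domain, `T > 0`,
`Q = Ω × (0,T]`, `Q̄ = closure Ω × [0,T]`. Suppose the coefficients `p i j`, `q i`, `r` and
the right-hand side `f` are continuous on `Q̄`, and `u ∈ C^{2,2}(Q̄)`: `u` is continuous on
`Q̄`, its spatial partial derivatives `ux i`, `uxx i j` exist for `x ∈ Ω`, `t ∈ [0,T]` and
are continuous on `Q̄`, and its time derivatives `ut`, `utt` exist on the interior and
extend continuously to `Q̄`. If `u` satisfies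
`D_t^δ u - Σ_{i,j} p_{ij} ∂²u/∂x_i∂x_j + Σ_i q_i ∂u/∂x_i + r u = f` at every point of `Q`,
then the initial value `φ₀ = u(·,0)` satisfies `L₀ φ₀(x) = f(x,0)` for every `x ∈ Ω`. -/
theorem initial_value_satisfies_elliptic_equation_wave
    (n : ℕ) (Ω : Set (Fin n → ℝ)) (hΩopen : IsOpen Ω) (hΩconn : IsConnected Ω)
    (hΩbdd : IsBounded Ω) (T δ : ℝ) (hT : 0 < T) (hδ1 : 1 < δ) (hδ2 : δ < 2)
    (p : Fin n → Fin n → (Fin n → ℝ) → ℝ → ℝ) (q : Fin n → (Fin n → ℝ) → ℝ → ℝ)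
    (r f : (Fin n → ℝ) → ℝ → ℝ)
    (hp : ∀ i j, ContinuousOn (fun z : (Fin n → ℝ) × ℝ => p i j z.1 z.2) (closure Ω ×ˢ Icc 0 T))
    (hq : ∀ i, ContinuousOn (fun z : (Fin n → ℝ) × ℝ => q i z.1 z.2) (closure Ω ×ˢ Icc 0 T))
    (hr : ContinuousOn (fun z : (Fin n → ℝ) × ℝ => r z.1 z.2) (closure Ω ×ˢ Icc 0 T))
    (hf : ContinuousOn (fun z : (Fin n → ℝ) × ℝ => f z.1 z.2) (closure Ω ×ˢ Icc 0 T))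
    (u ut utt : (Fin n → ℝ) → ℝ → ℝ)
    (ux : Fin n → (Fin n → ℝ) → ℝ → ℝ) (uxx : Fin n → Fin n → (Fin n → ℝ) → ℝ → ℝ)
    (hu_cont : ContinuousOn (fun z : (Fin n → ℝ) × ℝ => u z.1 z.2) (closure Ω ×ˢ Icc 0 T))
    (hux_deriv : ∀ i, ∀ x ∈ Ω, ∀ t ∈ Icc (0:ℝ) T,
      HasLineDerivAt ℝ (fun y => u y t) (ux i x t) x (Pi.single i 1))
    (huxx_deriv : ∀ i j, ∀ x ∈ Ω, ∀ t ∈ Icc (0:ℝ) T,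
      HasLineDerivAt ℝ (fun y => ux j y t) (uxx i j x t) x (Pi.single i 1))
    (hut_deriv : ∀ x ∈ Ω, ∀ t ∈ Ioc (0:ℝ) T, HasDerivAt (u x) (ut x t) t)
    (hutt_deriv : ∀ x ∈ Ω, ∀ t ∈ Ioc (0:ℝ) T, HasDerivAt (ut x) (utt x t) t)
    (hux_cont : ∀ i, ContinuousOn (fun z : (Fin n → ℝ) × ℝ => ux i z.1 z.2)
      (closure Ω ×ˢ Icc 0 T))
    (huxx_cont : ∀ i j, ContinuousOn (fun z : (Fin n → ℝ) × ℝ => uxx i j z.1 z.2)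
      (closure Ω ×ˢ Icc 0 T))
    (hut_cont : ContinuousOn (fun z : (Fin n → ℝ) × ℝ => ut z.1 z.2) (closure Ω ×ˢ Icc 0 T))
    (hutt_cont : ContinuousOn (fun z : (Fin n → ℝ) × ℝ => utt z.1 z.2) (closure Ω ×ˢ Icc 0 T))
    (hPDE : ∀ x ∈ Ω, ∀ t ∈ Ioc (0:ℝ) T,
      (1 / Real.Gamma (2 - δ)) * (∫ s in (0:ℝ)..t, (t - s) ^ (1 - δ) * utt x s)
        - (∑ i, ∑ j, p i j x t * uxx i j x t)
        + (∑ i, q i x t * ux i x t) + r x t * u x t = f x t) :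
    ∀ x ∈ Ω,
      -(∑ i, ∑ j, p i j x 0 * uxx i j x 0)
        + (∑ i, q i x 0 * ux i x 0) + r x 0 * u x 0 = f x 0 := by
  intro x hx
  have hxcl : x ∈ closure Ω := subset_closure hx
  set l : Filter ℝ := 𝓝[Ioc (0:ℝ) T] 0 with hl
  have hlne : l.NeBot := by
    rw [hl]
    apply mem_closure_iff_nhdsWithin_neBot.mp
    rw [closure_Ioc hT.ne]
    exact ⟨le_refl 0, hT.le⟩
  -- continuity along the time axis at 0
  have key : ∀ (g : (Fin n → ℝ) → ℝ → ℝ),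
      ContinuousOn (fun z : (Fin n → ℝ) × ℝ => g z.1 z.2) (closure Ω ×ˢ Icc 0 T) →
      Tendsto (fun t => g x t) l (𝓝 (g x 0)) := by
    intro g hg
    have h0 : (x, (0:ℝ)) ∈ closure Ω ×ˢ Icc 0 T := ⟨hxcl, le_refl 0, hT.le⟩
    have hmap : MapsTo (fun t : ℝ => (x, t)) (Ioc 0 T) (closure Ω ×ˢ Icc 0 T) :=
      fun t ht => ⟨hxcl, Ioc_subset_Icc_self ht⟩
    have hc : ContinuousWithinAt (fun t : ℝ => (x, t)) (Ioc 0 T) 0 :=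
      (continuous_const.prodMk continuous_id).continuousWithinAt
    exact (hg (x, 0) h0).comp hc hmap
  -- the elliptic expression tends to its value at 0
  have hE : Tendsto (fun t => f x t + (∑ i, ∑ j, p i j x t * uxx i j x t)
        - (∑ i, q i x t * ux i x t) - r x t * u x t) l
      (𝓝 (f x 0 + (∑ i, ∑ j, p i j x 0 * uxx i j x 0)
        - (∑ i, q i x 0 * ux i x 0) - r x 0 * u x 0)) := by
    refine (((key f hf).add ?_).sub ?_).sub (((key r hr).mul (key u hu_cont)))
    · exact tendsto_finset_sum _ fun i _ => tendsto_finset_sum _ fun j _ =>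
        ((key _ (hp i j)).mul (key _ (huxx_cont i j)))
    · exact tendsto_finset_sum _ fun i _ => ((key _ (hq i)).mul (key _ (hux_cont i)))
  -- bound on utt along the segment {x} × [0,T]
  have huttc : ContinuousOn (fun s => utt x s) (Icc 0 T) := by
    have hmap : MapsTo (fun t : ℝ => (x, t)) (Icc 0 T) (closure Ω ×ˢ Icc 0 T) :=
      fun t ht => ⟨hxcl, ht⟩
    exact hutt_cont.comp ((continuous_const.prodMk continuous_id).continuousOn) hmap
  obtain ⟨M, hM⟩ := isCompact_Icc.exists_bound_of_continuousOn huttc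
  have hM0 : 0 ≤ M := le_trans (norm_nonneg _) (hM 0 ⟨le_refl 0, hT.le⟩)
  have hexp : (-1 : ℝ) < 1 - δ := by linarith
  have h2δ : (0 : ℝ) < 2 - δ := by linarith
  -- the Caputo term tends to 0
  have hC : Tendsto (fun t => (1 / Real.Gamma (2 - δ)) *
      (∫ s in (0:ℝ)..t, (t - s) ^ (1 - δ) * utt x s)) l (𝓝 0) := by
    have hbound : ∀ t ∈ Ioc (0:ℝ) T,
        |(1 / Real.Gamma (2 - δ)) * (∫ s in (0:ℝ)..t, (t - s) ^ (1 - δ) * utt x s)|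
          ≤ (|1 / Real.Gamma (2 - δ)| * (M / (2 - δ))) * t ^ (2 - δ) := by
      intro t ht
      have h1 : IntervalIntegrable (fun s => (t - s) ^ (1 - δ)) MeasureTheory.volume 0 t := by
        have := (intervalIntegral.intervalIntegrable_rpow' hexp (a := t) (b := 0)).comp_sub_left t
        simpa using this
      have hsub : uIcc (0:ℝ) t ⊆ Icc 0 T := by
        rw [uIcc_of_le ht.1.le]
        exact Icc_subset_Icc (le_refl 0) ht.2
      have h2 : IntervalIntegrable (fun s => (t - s) ^ (1 - δ) * utt x s) MeasureTheory.volume 0 t :=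
        h1.mul_continuousOn (huttc.mono hsub)
      have h1M : IntervalIntegrable (fun s => (t - s) ^ (1 - δ) * M) MeasureTheory.volume 0 t :=
        h1.mul_continuousOn continuousOn_const
      have habs : |∫ s in (0:ℝ)..t, (t - s) ^ (1 - δ) * utt x s|
          ≤ ∫ s in (0:ℝ)..t, |(t - s) ^ (1 - δ) * utt x s| :=
        intervalIntegral.abs_integral_le_integral_abs ht.1.le
      have hmono : (∫ s in (0:ℝ)..t, |(t - s) ^ (1 - δ) * utt x s|)
          ≤ ∫ s in (0:ℝ)..t, (t - s) ^ (1 - δ) * M := by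
        apply intervalIntegral.integral_mono_on ht.1.le h2.abs h1M
        intro s hs
        rw [abs_mul, abs_of_nonneg (Real.rpow_nonneg (by linarith [hs.2]) _)]
        exact mul_le_mul_of_nonneg_left
          (hM s ⟨hs.1, le_trans hs.2 ht.2⟩) (Real.rpow_nonneg (by linarith [hs.2]) _)
      have hval : (∫ s in (0:ℝ)..t, (t - s) ^ (1 - δ)) = t ^ (2 - δ) / (2 - δ) := by
        have := intervalIntegral.integral_comp_sub_left (fun y => y ^ (1 - δ)) t
          (a := (0:ℝ)) (b := t)
        rw [show t - t = 0 by ring, show t - 0 = t by ring] at this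
        rw [this, integral_rpow (Or.inl hexp)]
        rw [Real.zero_rpow (by linarith : (1:ℝ) - δ + 1 ≠ 0)]
        ring_nf
      have hvalM : (∫ s in (0:ℝ)..t, (t - s) ^ (1 - δ) * M) = M / (2 - δ) * t ^ (2 - δ) := by
        rw [intervalIntegral.integral_mul_const, hval]
        ring
      calc |(1 / Real.Gamma (2 - δ)) * (∫ s in (0:ℝ)..t, (t - s) ^ (1 - δ) * utt x s)|
          = |1 / Real.Gamma (2 - δ)| * |∫ s in (0:ℝ)..t, (t - s) ^ (1 - δ) * utt x s| :=
            abs_mul _ _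
        _ ≤ |1 / Real.Gamma (2 - δ)| * (M / (2 - δ) * t ^ (2 - δ)) := by
            apply mul_le_mul_of_nonneg_left _ (abs_nonneg _)
            rw [← hvalM]
            exact le_trans habs hmono
        _ = (|1 / Real.Gamma (2 - δ)| * (M / (2 - δ))) * t ^ (2 - δ) := by ring
    have hpow : Tendsto (fun t : ℝ => (|1 / Real.Gamma (2 - δ)| * (M / (2 - δ))) * t ^ (2 - δ))
        l (𝓝 0) := by
      have h0 : Tendsto (fun t : ℝ => t ^ (2 - δ)) (𝓝 0) (𝓝 ((0:ℝ) ^ (2 - δ))) :=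
        Real.continuousAt_rpow_const 0 (2 - δ) (Or.inr h2δ.le)
      rw [Real.zero_rpow h2δ.ne'] at h0
      have h1 : Tendsto (fun t : ℝ => (|1 / Real.Gamma (2 - δ)| * (M / (2 - δ))) * t ^ (2 - δ))
          l (𝓝 ((|1 / Real.Gamma (2 - δ)| * (M / (2 - δ))) * 0)) :=
        (h0.const_mul _).mono_left nhdsWithin_le_nhds
      simpa using h1
    apply squeeze_zero_norm' _ hpow
    filter_upwards [self_mem_nhdsWithin] with t ht
    exact hbound t ht
  -- combine: on Ioc the Caputo term equals the elliptic expression rearranged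
  have hEq : ∀ᶠ t in l, (1 / Real.Gamma (2 - δ)) *
      (∫ s in (0:ℝ)..t, (t - s) ^ (1 - δ) * utt x s)
      = f x t + (∑ i, ∑ j, p i j x t * uxx i j x t)
        - (∑ i, q i x t * ux i x t) - r x t * u x t := by
    filter_upwards [self_mem_nhdsWithin] with t ht
    have := hPDE x hx t ht
    linarith
  have hC' : Tendsto (fun t => f x t + (∑ i, ∑ j, p i j x t * uxx i j x t)
        - (∑ i, q i x t * ux i x t) - r x t * u x t) l (𝓝 0) :=
    hC.congr' hEq
  have := tendsto_nhds_unique hC' hE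
  linarith
end

section
/- Let 0 < δ < 1, T > 0, and Q̄ := [0,π] × [0,T]. Suppose v ∈ C^{2,1}(Q̄) (i.e. v, ∂v/∂x, ∂²v/∂x², ∂v/∂t are continuous on Q̄) satisfies the fractional heat equation D_t^δ v(x,t) - ∂²v/∂x²(x,t) = 0 for all (x,t) ∈ (0,π) × (0,T] and the boundary conditions v(0,t) = v(π,t) = 0 for all t ∈ [0,T]. Then the initial value vanishes identically: v(x,0) = 0 for all x ∈ [0,π]. -/
open Real Filter Set Topology

/-- Example 2.4: let `0 < δ < 1`, `T > 0`, `Q̄ = [0,π] × [0,T]`. If `v ∈ C^{2,1}(Q̄)`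
(i.e. `v` is continuous on `Q̄`, its spatial derivatives `vx = ∂v/∂x`, `vxx = ∂²v/∂x²` exist
for `x ∈ (0,π)` and, together with the time derivative `vt = ∂v/∂t`, extend continuously to
`Q̄`) satisfies the fractional heat equation `D_t^δ v - v_xx = 0` on `(0,π) × (0,T]` and the
boundary conditions `v(0,t) = v(π,t) = 0`, then the initial value vanishes identically:
`v(x,0) = 0` for all `x ∈ [0,π]`. -/
theorem smooth_solution_of_fractional_heat_has_zero_initial_value
    (δ T : ℝ) (hδ0 : 0 < δ) (hδ1 : δ < 1) (hT : 0 < T)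
    (v vx vxx vt : ℝ → ℝ → ℝ)
    (hv_cont : ContinuousOn (fun z : ℝ × ℝ => v z.1 z.2) (Icc 0 Real.pi ×ˢ Icc 0 T))
    (hvx_deriv : ∀ x ∈ Ioo (0:ℝ) Real.pi, ∀ t ∈ Icc (0:ℝ) T,
      HasDerivAt (fun y => v y t) (vx x t) x)
    (hvxx_deriv : ∀ x ∈ Ioo (0:ℝ) Real.pi, ∀ t ∈ Icc (0:ℝ) T,
      HasDerivAt (fun y => vx y t) (vxx x t) x)
    (hvt_deriv : ∀ x ∈ Ioo (0:ℝ) Real.pi, ∀ t ∈ Ioc (0:ℝ) T, HasDerivAt (v x) (vt x t) t)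
    (hvx_cont : ContinuousOn (fun z : ℝ × ℝ => vx z.1 z.2) (Icc 0 Real.pi ×ˢ Icc 0 T))
    (hvxx_cont : ContinuousOn (fun z : ℝ × ℝ => vxx z.1 z.2) (Icc 0 Real.pi ×ˢ Icc 0 T))
    (hvt_cont : ContinuousOn (fun z : ℝ × ℝ => vt z.1 z.2) (Icc 0 Real.pi ×ˢ Icc 0 T))
    (hPDE : ∀ x ∈ Ioo (0:ℝ) Real.pi, ∀ t ∈ Ioc (0:ℝ) T,
      (1 / Real.Gamma (1 - δ)) * (∫ s in (0:ℝ)..t, (t - s) ^ (-δ) * vt x s) - vxx x t = 0)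
    (hbc : ∀ t ∈ Icc (0:ℝ) T, v 0 t = 0 ∧ v Real.pi t = 0) :
    ∀ x ∈ Icc (0:ℝ) Real.pi, v x 0 = 0 := by
  have h1δ : (0:ℝ) < 1 - δ := by linarith
  have h0T : (0:ℝ) ∈ Icc 0 T := ⟨le_rfl, hT.le⟩
  obtain ⟨M, hM⟩ := (isCompact_Icc.prod isCompact_Icc).exists_bound_of_continuousOn hvt_cont
  have hM0 : (0:ℝ) ≤ M :=
    (norm_nonneg _).trans (hM (0, 0) ⟨⟨le_rfl, Real.pi_pos.le⟩, h0T⟩)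
  set C : ℝ := |1 / Real.Gamma (1 - δ)| * (M / (1 - δ)) with hC
  -- Step 1: vxx x 0 = 0 for interior x
  have hvxx0 : ∀ x ∈ Ioo (0:ℝ) Real.pi, vxx x 0 = 0 := by
    intro x hx
    have hxIcc : x ∈ Icc (0:ℝ) Real.pi := Ioo_subset_Icc_self hx
    have hcont : Tendsto (fun t => vxx x t) (𝓝[>] (0:ℝ)) (𝓝 (vxx x 0)) := by
      have h1 : ContinuousWithinAt (fun t => vxx x t) (Icc 0 T) 0 := by
        have h := hvxx_cont.comp (Continuous.continuousOn
            (f := fun t : ℝ => ((x : ℝ), t)) (by fun_prop))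
            (fun t (ht : t ∈ Icc (0:ℝ) T) => ⟨hxIcc, ht⟩)
        exact h 0 h0T
      have h2 : 𝓝[>] (0:ℝ) ≤ 𝓝[Icc 0 T] 0 := by
        rw [← nhdsWithin_Ioc_eq_nhdsGT hT]
        exact nhdsWithin_mono _ Ioc_subset_Icc_self
      exact h1.tendsto.mono_left h2
    have hbound : ∀ t ∈ Ioc (0:ℝ) T, |vxx x t| ≤ C * t ^ (1 - δ) := by
      intro t ht
      have hPDE' := hPDE x hx t ht
      have hvxxeq : vxx x t
          = (1 / Real.Gamma (1 - δ)) * ∫ s in (0:ℝ)..t, (t - s) ^ (-δ) * vt x s := by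
        linarith
      have hInt : IntervalIntegrable (fun s => (t - s) ^ (-δ)) MeasureTheory.volume 0 t := by
        have h := (intervalIntegral.intervalIntegrable_rpow'
          (a := 0) (b := t) (r := -δ) (by linarith)).comp_sub_left t
        simpa using h.symm
      have hnorm : ‖∫ s in (0:ℝ)..t, (t - s) ^ (-δ) * vt x s‖
          ≤ |∫ s in (0:ℝ)..t, (t - s) ^ (-δ) * M| := by
        apply intervalIntegral.norm_integral_le_abs_of_norm_le
        · filter_upwards [MeasureTheory.ae_restrict_mem measurableSet_uIoc] with s hs
          rw [Set.uIoc_of_le ht.1.le] at hs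
          have h1 : (0:ℝ) ≤ (t - s) ^ (-δ) := Real.rpow_nonneg (by linarith [hs.2]) _
          rw [norm_mul, Real.norm_eq_abs, Real.norm_eq_abs, abs_of_nonneg h1]
          exact mul_le_mul_of_nonneg_left
            (by simpa using hM (x, s) ⟨hxIcc, ⟨hs.1.le, hs.2.trans ht.2⟩⟩) h1
        · exact hInt.mul_continuousOn continuousOn_const
      have hval : ∫ s in (0:ℝ)..t, (t - s) ^ (-δ) * M = t ^ (1 - δ) / (1 - δ) * M := by
        rw [intervalIntegral.integral_mul_const]
        have h2 : (∫ s in (0:ℝ)..t, (t - s) ^ (-δ))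
            = ∫ s in (0:ℝ)..t, (fun u : ℝ => u ^ (-δ)) (t - s) := rfl
        rw [h2, intervalIntegral.integral_comp_sub_left (fun u : ℝ => u ^ (-δ)) t,
          sub_zero, sub_self, integral_rpow (Or.inl (by linarith)),
          Real.zero_rpow (by linarith), sub_zero]
        have h3 : -δ + 1 = 1 - δ := by ring
        rw [h3]
      have hnn : (0:ℝ) ≤ t ^ (1 - δ) / (1 - δ) * M :=
        mul_nonneg (div_nonneg (Real.rpow_nonneg ht.1.le _) h1δ.le) hM0
      calc |vxx x t| = |1 / Real.Gamma (1 - δ)|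
            * ‖∫ s in (0:ℝ)..t, (t - s) ^ (-δ) * vt x s‖ := by
            rw [hvxxeq, abs_mul]; rfl
        _ ≤ |1 / Real.Gamma (1 - δ)| * (t ^ (1 - δ) / (1 - δ) * M) := by
            refine mul_le_mul_of_nonneg_left ?_ (abs_nonneg _)
            calc ‖∫ s in (0:ℝ)..t, (t - s) ^ (-δ) * vt x s‖
                ≤ |∫ s in (0:ℝ)..t, (t - s) ^ (-δ) * M| := hnorm
              _ = t ^ (1 - δ) / (1 - δ) * M := by rw [hval, abs_of_nonneg hnn]
        _ = C * t ^ (1 - δ) := by rw [hC]; ring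
    have hev : ∀ᶠ t in 𝓝[>] (0:ℝ), ‖vxx x t‖ ≤ C * t ^ (1 - δ) := by
      filter_upwards [Ioc_mem_nhdsGT_of_mem (⟨le_rfl, hT⟩ : (0:ℝ) ∈ Ico 0 T)] with t ht
      simpa [Real.norm_eq_abs] using hbound t ht
    have htend : Tendsto (fun t : ℝ => C * t ^ (1 - δ)) (𝓝[>] (0:ℝ)) (𝓝 0) := by
      have h := (Real.continuousAt_rpow_const 0 (1 - δ) (Or.inr h1δ.le)).tendsto
      rw [Real.zero_rpow h1δ.ne'] at h
      have h2 := (h.const_mul C).mono_left (nhdsWithin_le_nhds (s := Ioi (0:ℝ)))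
      simpa using h2
    exact tendsto_nhds_unique hcont (squeeze_zero_norm' hev htend)
  -- continuity of traces at t = 0
  have hv0_cont : ContinuousOn (fun y => v y 0) (Icc 0 Real.pi) :=
    hv_cont.comp (Continuous.continuousOn
      (f := fun z : ℝ => (z, (0:ℝ))) (by fun_prop))
      (fun z (hz : z ∈ Icc (0:ℝ) Real.pi) => ⟨hz, h0T⟩)
  have hvx0_cont : ContinuousOn (fun y => vx y 0) (Icc 0 Real.pi) :=
    hvx_cont.comp (Continuous.continuousOn
      (f := fun z : ℝ => (z, (0:ℝ))) (by fun_prop))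
      (fun z (hz : z ∈ Icc (0:ℝ) Real.pi) => ⟨hz, h0T⟩)
  -- vx · 0 is constant on (0, π)
  have hxconst : ∀ a ∈ Ioo (0:ℝ) Real.pi, ∀ b ∈ Ioo (0:ℝ) Real.pi, a < b →
      vx a 0 = vx b 0 := by
    intro a ha b hb hab
    obtain ⟨c, hc, hslope⟩ := exists_hasDerivAt_eq_slope (fun y => vx y 0)
      (fun y => vxx y 0) hab
      (hvx0_cont.mono (Icc_subset_Icc ha.1.le hb.2.le))
      (fun y hy => hvxx_deriv y ⟨ha.1.trans hy.1, hy.2.trans hb.2⟩ 0 h0T)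
    rw [hvxx0 c ⟨ha.1.trans hc.1, hc.2.trans hb.2⟩] at hslope
    have hba : b - a ≠ 0 := sub_ne_zero.2 hab.ne'
    have := hslope.symm
    rw [div_eq_zero_iff] at this
    rcases this with h | h
    · linarith [sub_eq_zero.1 h]
    · exact absurd h hba
  -- MVT from 0
  have key : ∀ x ∈ Ioc (0:ℝ) Real.pi, ∃ ξ ∈ Ioo (0:ℝ) x, v x 0 = x * vx ξ 0 := by
    intro x hx
    obtain ⟨ξ, hξ, hs⟩ := exists_hasDerivAt_eq_slope (fun y => v y 0)
      (fun y => vx y 0) hx.1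
      (hv0_cont.mono (Icc_subset_Icc le_rfl hx.2))
      (fun y hy => hvx_deriv y ⟨hy.1, hy.2.trans_le hx.2⟩ 0 h0T)
    refine ⟨ξ, hξ, ?_⟩
    have h00 : v 0 0 = 0 := (hbc 0 h0T).1
    rw [h00, sub_zero, sub_zero, eq_div_iff hx.1.ne'] at hs
    linarith
  -- vx · 0 vanishes on (0, π)
  obtain ⟨ξπ, hξπ, heqπ⟩ := key Real.pi ⟨Real.pi_pos, le_rfl⟩
  have hπ0 : v Real.pi 0 = 0 := (hbc 0 h0T).2
  have hzeroξπ : vx ξπ 0 = 0 := by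
    rw [hπ0] at heqπ
    rcases mul_eq_zero.1 heqπ.symm with h | h
    · exact absurd h Real.pi_ne_zero
    · exact h
  have hvxzero : ∀ y ∈ Ioo (0:ℝ) Real.pi, vx y 0 = 0 := by
    intro y hy
    rcases lt_trichotomy y ξπ with h | h | h
    · rw [hxconst y hy ξπ hξπ h, hzeroξπ]
    · rw [h, hzeroξπ]
    · rw [← hxconst ξπ hξπ y hy h, hzeroξπ]
  -- conclude
  intro x hx
  rcases eq_or_lt_of_le hx.1 with h0 | h0
  · rw [← h0]
    exact (hbc 0 h0T).1
  · obtain ⟨ξ, hξ, heq⟩ := key x ⟨h0, hx.2⟩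
    rw [heq, hvxzero ξ ⟨hξ.1, hξ.2.trans_le hx.2⟩, mul_zero]
end

section
/- Let Ω ⊆ ℝⁿ be a bounded domain, T > 0, Q := Ω × (0,T], Q̄ := closure(Ω) × [0,T], and 0 < δ < 1. Let p_{ij}, q_i, r, f be continuous on Q̄ and ψ continuous on ∂Ω × [0,T], and define L_0 w(x) := -Σ_{i,j} p_{ij}(x,0) ∂²w/∂x_i∂x_j(x) + Σ_i q_i(x,0) ∂w/∂x_i(x) + r(x,0) w(x). Assume the elliptic boundary value problem L_0 w = f(·,0) on Ω with w = ψ(·,0) on ∂Ω has at most one solution in C²(Ω) ∩ C(Ω̄). If u_1, u_2 ∈ C^{2,1}(Q̄) both satisfy D_t^δ u - Σ_{i,j} p_{ij} ∂²u/∂x_i∂x_j + Σ_i q_i ∂u/∂x_i + r u = f on Q and u_1 = u_2 = ψ on ∂Ω × (0,T], then u_1(x,0) = u_2(x,0) for all x ∈ closure(Ω); that is, the initial value of any such solution is determined uniquely by L_0, f and ψ. -/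
open Real Filter Set Topology Bornology

open MeasureTheory

set_option maxHeartbeats 1000000

/-- Corollary 2.5: let `Ω ⊆ ℝⁿ` be a bounded domain, `T > 0`, `0 < δ < 1`, with coefficients
`p i j`, `q i`, `r`, right-hand side `f` continuous on `Q̄ = closure Ω × [0,T]` and boundary
data `ψ` continuous on `∂Ω × [0,T]`. Assume the elliptic boundary value problem
`L₀ w = f(·,0)` in `Ω`, `w = ψ(·,0)` on `∂Ω`, where
`L₀ w = -Σ_{i,j} p_{ij}(·,0) ∂²w/∂x_i∂x_j + Σ_i q_i(·,0) ∂w/∂x_i + r(·,0) w`,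
has at most one solution in `C²(Ω) ∩ C(Ω̄)`. If `u₁, u₂ ∈ C^{2,1}(Q̄)` both satisfy the
fractional PDE `D_t^δ u - Σ_{i,j} p_{ij} ∂²u/∂x_i∂x_j + Σ_i q_i ∂u/∂x_i + r u = f` on
`Q = Ω × (0,T]` and the boundary condition `u = ψ` on `∂Ω × (0,T]`, then their initial
values coincide: `u₁(·,0) = u₂(·,0)` on `closure Ω`. That is, the initial value of any
such solution is determined uniquely by `L₀`, `f` and `ψ`. -/
theorem initial_value_determined_uniquely
    (n : ℕ) (Ω : Set (Fin n → ℝ)) (hΩopen : IsOpen Ω) (hΩconn : IsConnected Ω)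
    (hΩbdd : IsBounded Ω) (T δ : ℝ) (hT : 0 < T) (hδ0 : 0 < δ) (hδ1 : δ < 1)
    (p : Fin n → Fin n → (Fin n → ℝ) → ℝ → ℝ) (q : Fin n → (Fin n → ℝ) → ℝ → ℝ)
    (r f : (Fin n → ℝ) → ℝ → ℝ) (ψ : (Fin n → ℝ) → ℝ → ℝ)
    (hp : ∀ i j, ContinuousOn (fun z : (Fin n → ℝ) × ℝ => p i j z.1 z.2) (closure Ω ×ˢ Icc 0 T))
    (hq : ∀ i, ContinuousOn (fun z : (Fin n → ℝ) × ℝ => q i z.1 z.2) (closure Ω ×ˢ Icc 0 T))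
    (hr : ContinuousOn (fun z : (Fin n → ℝ) × ℝ => r z.1 z.2) (closure Ω ×ˢ Icc 0 T))
    (hf : ContinuousOn (fun z : (Fin n → ℝ) × ℝ => f z.1 z.2) (closure Ω ×ˢ Icc 0 T))
    (hψ : ContinuousOn (fun z : (Fin n → ℝ) × ℝ => ψ z.1 z.2) (frontier Ω ×ˢ Icc 0 T))
    -- Assumption 2.6: the elliptic problem `L₀ w = f(·,0)` in `Ω`, `w = ψ(·,0)` on `∂Ω`
    -- has at most one solution in `C²(Ω) ∩ C(Ω̄)`:
    (huniq : ∀ (w₁ w₂ : (Fin n → ℝ) → ℝ)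
        (w₁x w₂x : Fin n → (Fin n → ℝ) → ℝ)
        (w₁xx w₂xx : Fin n → Fin n → (Fin n → ℝ) → ℝ),
      ContinuousOn w₁ (closure Ω) → ContinuousOn w₂ (closure Ω) →
      (∀ i, ∀ x ∈ Ω, HasLineDerivAt ℝ w₁ (w₁x i x) x (Pi.single i 1)) →
      (∀ i, ∀ x ∈ Ω, HasLineDerivAt ℝ w₂ (w₂x i x) x (Pi.single i 1)) →
      (∀ i j, ∀ x ∈ Ω, HasLineDerivAt ℝ (w₁x j) (w₁xx i j x) x (Pi.single i 1)) →
      (∀ i j, ∀ x ∈ Ω, HasLineDerivAt ℝ (w₂x j) (w₂xx i j x) x (Pi.single i 1)) →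
      (∀ x ∈ Ω, -(∑ i, ∑ j, p i j x 0 * w₁xx i j x)
          + (∑ i, q i x 0 * w₁x i x) + r x 0 * w₁ x = f x 0) →
      (∀ x ∈ Ω, -(∑ i, ∑ j, p i j x 0 * w₂xx i j x)
          + (∑ i, q i x 0 * w₂x i x) + r x 0 * w₂ x = f x 0) →
      (∀ x ∈ frontier Ω, w₁ x = ψ x 0) →
      (∀ x ∈ frontier Ω, w₂ x = ψ x 0) →
      Set.EqOn w₁ w₂ (closure Ω))
    (u₁ u₂ u₁t u₂t : (Fin n → ℝ) → ℝ → ℝ)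
    (u₁x u₂x : Fin n → (Fin n → ℝ) → ℝ → ℝ)
    (u₁xx u₂xx : Fin n → Fin n → (Fin n → ℝ) → ℝ → ℝ)
    -- `u₁, u₂ ∈ C^{2,1}(Q̄)`:
    (hu₁_cont : ContinuousOn (fun z : (Fin n → ℝ) × ℝ => u₁ z.1 z.2) (closure Ω ×ˢ Icc 0 T))
    (hu₂_cont : ContinuousOn (fun z : (Fin n → ℝ) × ℝ => u₂ z.1 z.2) (closure Ω ×ˢ Icc 0 T))
    (hu₁x_deriv : ∀ i, ∀ x ∈ Ω, ∀ t ∈ Icc (0:ℝ) T,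
      HasLineDerivAt ℝ (fun y => u₁ y t) (u₁x i x t) x (Pi.single i 1))
    (hu₂x_deriv : ∀ i, ∀ x ∈ Ω, ∀ t ∈ Icc (0:ℝ) T,
      HasLineDerivAt ℝ (fun y => u₂ y t) (u₂x i x t) x (Pi.single i 1))
    (hu₁xx_deriv : ∀ i j, ∀ x ∈ Ω, ∀ t ∈ Icc (0:ℝ) T,
      HasLineDerivAt ℝ (fun y => u₁x j y t) (u₁xx i j x t) x (Pi.single i 1))
    (hu₂xx_deriv : ∀ i j, ∀ x ∈ Ω, ∀ t ∈ Icc (0:ℝ) T,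
      HasLineDerivAt ℝ (fun y => u₂x j y t) (u₂xx i j x t) x (Pi.single i 1))
    (hu₁t_deriv : ∀ x ∈ Ω, ∀ t ∈ Ioc (0:ℝ) T, HasDerivAt (u₁ x) (u₁t x t) t)
    (hu₂t_deriv : ∀ x ∈ Ω, ∀ t ∈ Ioc (0:ℝ) T, HasDerivAt (u₂ x) (u₂t x t) t)
    (hu₁x_cont : ∀ i, ContinuousOn (fun z : (Fin n → ℝ) × ℝ => u₁x i z.1 z.2)
      (closure Ω ×ˢ Icc 0 T))
    (hu₂x_cont : ∀ i, ContinuousOn (fun z : (Fin n → ℝ) × ℝ => u₂x i z.1 z.2)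
      (closure Ω ×ˢ Icc 0 T))
    (hu₁xx_cont : ∀ i j, ContinuousOn (fun z : (Fin n → ℝ) × ℝ => u₁xx i j z.1 z.2)
      (closure Ω ×ˢ Icc 0 T))
    (hu₂xx_cont : ∀ i j, ContinuousOn (fun z : (Fin n → ℝ) × ℝ => u₂xx i j z.1 z.2)
      (closure Ω ×ˢ Icc 0 T))
    (hu₁t_cont : ContinuousOn (fun z : (Fin n → ℝ) × ℝ => u₁t z.1 z.2) (closure Ω ×ˢ Icc 0 T))
    (hu₂t_cont : ContinuousOn (fun z : (Fin n → ℝ) × ℝ => u₂t z.1 z.2) (closure Ω ×ˢ Icc 0 T))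
    -- both satisfy the fractional PDE on `Q`:
    (hPDE₁ : ∀ x ∈ Ω, ∀ t ∈ Ioc (0:ℝ) T,
      (1 / Real.Gamma (1 - δ)) * (∫ s in (0:ℝ)..t, (t - s) ^ (-δ) * u₁t x s)
        - (∑ i, ∑ j, p i j x t * u₁xx i j x t)
        + (∑ i, q i x t * u₁x i x t) + r x t * u₁ x t = f x t)
    (hPDE₂ : ∀ x ∈ Ω, ∀ t ∈ Ioc (0:ℝ) T,
      (1 / Real.Gamma (1 - δ)) * (∫ s in (0:ℝ)..t, (t - s) ^ (-δ) * u₂t x s)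
        - (∑ i, ∑ j, p i j x t * u₂xx i j x t)
        + (∑ i, q i x t * u₂x i x t) + r x t * u₂ x t = f x t)
    -- both equal the boundary data `ψ` on `∂Ω × (0,T]`:
    (hbc₁ : ∀ x ∈ frontier Ω, ∀ t ∈ Ioc (0:ℝ) T, u₁ x t = ψ x t)
    (hbc₂ : ∀ x ∈ frontier Ω, ∀ t ∈ Ioc (0:ℝ) T, u₂ x t = ψ x t) :
    ∀ x ∈ closure Ω, u₁ x 0 = u₂ x 0 := by
  classical
  have hT0 : (0:ℝ) ∈ Icc 0 T := ⟨le_refl 0, hT.le⟩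
  set l : Filter ℝ := 𝓝[Ioc (0:ℝ) T] 0 with hl
  have hlne : l.NeBot := by
    rw [hl, ← mem_closure_iff_nhdsWithin_neBot, closure_Ioc hT.ne]
    exact hT0
  -- continuity in time of a jointly continuous function, at t = 0
  have key : ∀ (s : Set (Fin n → ℝ)) (x : Fin n → ℝ), x ∈ s →
      ∀ (g : (Fin n → ℝ) → ℝ → ℝ),
      ContinuousOn (fun z : (Fin n → ℝ) × ℝ => g z.1 z.2) (s ×ˢ Icc 0 T) →
      Tendsto (fun t => g x t) l (𝓝 (g x 0)) := by
    intro s x hx g hg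
    have h1 : ContinuousWithinAt (fun t => g x t) (Icc 0 T) 0 := by
      have h2 := hg (x, 0) (mk_mem_prod hx hT0)
      exact h2.comp ((continuous_const.prodMk continuous_id).continuousWithinAt)
        (fun t ht => mk_mem_prod hx ht)
    exact h1.mono_left (nhdsWithin_mono 0 Ioc_subset_Icc_self)
  have hδ' : (0:ℝ) < 1 - δ := by linarith
  -- the fractional term tends to 0 as t → 0⁺
  have hfrac : ∀ (x : Fin n → ℝ) (ut : (Fin n → ℝ) → ℝ → ℝ), x ∈ closure Ω →
      ContinuousOn (fun z : (Fin n → ℝ) × ℝ => ut z.1 z.2) (closure Ω ×ˢ Icc 0 T) →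
      Tendsto (fun t => (1 / Real.Gamma (1 - δ)) *
        (∫ s in (0:ℝ)..t, (t - s) ^ (-δ) * ut x s)) l (𝓝 0) := by
    intro x ut hx hut
    have hcont : ContinuousOn (fun s => ut x s) (Icc 0 T) := by
      intro t ht
      have h2 := hut (x, t) (mk_mem_prod hx ht)
      exact h2.comp ((continuous_const.prodMk continuous_id).continuousWithinAt)
        (fun s hs => mk_mem_prod hx hs)
    obtain ⟨M, hM⟩ := (isCompact_Icc).exists_bound_of_continuousOn hcont
    have hM0 : 0 ≤ M := le_trans (norm_nonneg _) (hM 0 hT0)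
    set C : ℝ := |1 / Real.Gamma (1 - δ)| * (M / (1 - δ)) with hC
    have hbound : ∀ t ∈ Ioc (0:ℝ) T,
        ‖(1 / Real.Gamma (1 - δ)) * ∫ s in (0:ℝ)..t, (t - s) ^ (-δ) * ut x s‖
          ≤ C * t ^ (1 - δ) := by
      intro t ht
      have h0t : (0:ℝ) ≤ t := ht.1.le
      have hrint : IntervalIntegrable (fun s : ℝ => (t - s) ^ (-δ)) volume 0 t := by
        have h1 : IntervalIntegrable (fun s : ℝ => s ^ (-δ)) volume 0 t :=
          intervalIntegral.intervalIntegrable_rpow' (by linarith)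
        have h2 := (h1.comp_sub_left t).symm
        simpa using h2
      have hgint : IntervalIntegrable (fun s : ℝ => (t - s) ^ (-δ) * M) volume 0 t :=
        hrint.mul_const M
      have hle : ‖∫ s in (0:ℝ)..t, (t - s) ^ (-δ) * ut x s‖
          ≤ |∫ s in (0:ℝ)..t, (t - s) ^ (-δ) * M| := by
        apply intervalIntegral.norm_integral_le_abs_of_norm_le _ hgint
        rw [Set.uIoc_of_le h0t]
        filter_upwards [MeasureTheory.ae_restrict_mem measurableSet_Ioc] with s hs
        have hts : (0:ℝ) ≤ t - s := by linarith [hs.2]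
        have hnn : (0:ℝ) ≤ (t - s) ^ (-δ) := Real.rpow_nonneg hts _
        rw [norm_mul, Real.norm_of_nonneg hnn]
        have hsM : ‖ut x s‖ ≤ M := hM s ⟨hs.1.le, le_trans hs.2 ht.2⟩
        exact mul_le_mul_of_nonneg_left hsM hnn
      have hval : (∫ s in (0:ℝ)..t, (t - s) ^ (-δ) * M)
          = (t ^ (1 - δ) / (1 - δ)) * M := by
        rw [intervalIntegral.integral_mul_const]
        have h1 : (∫ s in (0:ℝ)..t, (t - s) ^ (-δ))
            = ∫ s in (0:ℝ)..t, s ^ (-δ) := by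
          have := intervalIntegral.integral_comp_sub_left (a := (0:ℝ)) (b := t)
            (fun s : ℝ => s ^ (-δ)) t
          simpa using this
        rw [h1, integral_rpow (Or.inl (by linarith))]
        rw [Real.zero_rpow (by linarith : -δ + 1 ≠ 0)]
        ring_nf
      rw [norm_mul]
      calc ‖(1:ℝ) / Real.Gamma (1 - δ)‖ * ‖∫ s in (0:ℝ)..t, (t - s) ^ (-δ) * ut x s‖
          ≤ |1 / Real.Gamma (1 - δ)| * |∫ s in (0:ℝ)..t, (t - s) ^ (-δ) * M| :=
            mul_le_mul_of_nonneg_left hle (abs_nonneg _)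
        _ = |1 / Real.Gamma (1 - δ)| * ((t ^ (1 - δ) / (1 - δ)) * M) := by
            have h4 : (0:ℝ) ≤ (t ^ (1 - δ) / (1 - δ)) * M :=
              mul_nonneg (div_nonneg (Real.rpow_nonneg h0t _) hδ'.le) hM0
            rw [hval, abs_of_nonneg h4]
        _ = C * t ^ (1 - δ) := by rw [hC]; ring
    have htend : Tendsto (fun t : ℝ => C * t ^ (1 - δ)) l (𝓝 0) := by
      have h1 : Tendsto (fun t : ℝ => t ^ (1 - δ)) (𝓝 0) (𝓝 ((0:ℝ) ^ (1 - δ))) :=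
        (Real.continuousAt_rpow_const 0 (1 - δ) (Or.inr hδ'.le))
      rw [Real.zero_rpow hδ'.ne'] at h1
      have h2 := (h1.const_mul C).mono_left (nhdsWithin_le_nhds (s := Ioc (0:ℝ) T))
      simpa using h2
    apply squeeze_zero_norm' _ htend
    filter_upwards [self_mem_nhdsWithin] with t ht
    exact hbound t ht
  -- the PDE at t = 0
  have main : ∀ (u ut : (Fin n → ℝ) → ℝ → ℝ)
      (ux : Fin n → (Fin n → ℝ) → ℝ → ℝ)
      (uxx : Fin n → Fin n → (Fin n → ℝ) → ℝ → ℝ),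
      ContinuousOn (fun z : (Fin n → ℝ) × ℝ => u z.1 z.2) (closure Ω ×ˢ Icc 0 T) →
      (∀ i, ContinuousOn (fun z : (Fin n → ℝ) × ℝ => ux i z.1 z.2) (closure Ω ×ˢ Icc 0 T)) →
      (∀ i j, ContinuousOn (fun z : (Fin n → ℝ) × ℝ => uxx i j z.1 z.2) (closure Ω ×ˢ Icc 0 T)) →
      ContinuousOn (fun z : (Fin n → ℝ) × ℝ => ut z.1 z.2) (closure Ω ×ˢ Icc 0 T) →
      (∀ x ∈ Ω, ∀ t ∈ Ioc (0:ℝ) T,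
        (1 / Real.Gamma (1 - δ)) * (∫ s in (0:ℝ)..t, (t - s) ^ (-δ) * ut x s)
          - (∑ i, ∑ j, p i j x t * uxx i j x t)
          + (∑ i, q i x t * ux i x t) + r x t * u x t = f x t) →
      ∀ x ∈ Ω, -(∑ i, ∑ j, p i j x 0 * uxx i j x 0)
          + (∑ i, q i x 0 * ux i x 0) + r x 0 * u x 0 = f x 0 := by
    intro u ut ux uxx hu hux huxx hut hPDE x hx
    have hx' : x ∈ closure Ω := subset_closure hx
    have hA : Tendsto (fun t => -(∑ i, ∑ j, p i j x t * uxx i j x t)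
        + (∑ i, q i x t * ux i x t) + r x t * u x t) l
        (𝓝 (-(∑ i, ∑ j, p i j x 0 * uxx i j x 0)
        + (∑ i, q i x 0 * ux i x 0) + r x 0 * u x 0)) := by
      refine Tendsto.add (Tendsto.add (Tendsto.neg ?_) ?_) ?_
      · exact tendsto_finset_sum _ fun i _ => tendsto_finset_sum _ fun j _ =>
          (key _ x hx' _ (hp i j)).mul (key _ x hx' _ (huxx i j))
      · exact tendsto_finset_sum _ fun i _ =>
          (key _ x hx' _ (hq i)).mul (key _ x hx' _ (hux i))
      · exact (key _ x hx' _ hr).mul (key _ x hx' _ hu)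
    have hB : Tendsto (fun t => f x t - (1 / Real.Gamma (1 - δ)) *
        (∫ s in (0:ℝ)..t, (t - s) ^ (-δ) * ut x s)) l (𝓝 (f x 0 - 0)) :=
      (key _ x hx' _ hf).sub (hfrac x ut hx' hut)
    have hEE : ∀ᶠ t in l, (-(∑ i, ∑ j, p i j x t * uxx i j x t)
        + (∑ i, q i x t * ux i x t) + r x t * u x t) =
        f x t - (1 / Real.Gamma (1 - δ)) *
          (∫ s in (0:ℝ)..t, (t - s) ^ (-δ) * ut x s) := by
      filter_upwards [self_mem_nhdsWithin] with t ht
      have h2 := hPDE x hx t ht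
      linarith
    have h3 := tendsto_nhds_unique (hA.congr' hEE) hB
    linarith
  -- boundary values at t = 0
  have hbdry : ∀ (u : (Fin n → ℝ) → ℝ → ℝ),
      ContinuousOn (fun z : (Fin n → ℝ) × ℝ => u z.1 z.2) (closure Ω ×ˢ Icc 0 T) →
      (∀ x ∈ frontier Ω, ∀ t ∈ Ioc (0:ℝ) T, u x t = ψ x t) →
      ∀ x ∈ frontier Ω, u x 0 = ψ x 0 := by
    intro u hu hbc x hx
    have hx' : x ∈ closure Ω := frontier_subset_closure hx
    have h1 := key _ x hx' u hu
    have h2 := key _ x hx ψ hψ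
    refine tendsto_nhds_unique (h1.congr' ?_) h2
    filter_upwards [self_mem_nhdsWithin] with t ht
    exact hbc x hx t ht
  have hcont0 : ∀ (u : (Fin n → ℝ) → ℝ → ℝ),
      ContinuousOn (fun z : (Fin n → ℝ) × ℝ => u z.1 z.2) (closure Ω ×ˢ Icc 0 T) →
      ContinuousOn (fun x => u x 0) (closure Ω) := by
    intro u hu
    exact hu.comp ((continuous_id.prodMk continuous_const).continuousOn)
      (fun x hx => mk_mem_prod hx hT0)
  exact huniq (fun x => u₁ x 0) (fun x => u₂ x 0)
    (fun i x => u₁x i x 0) (fun i x => u₂x i x 0)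
    (fun i j x => u₁xx i j x 0) (fun i j x => u₂xx i j x 0)
    (hcont0 u₁ hu₁_cont) (hcont0 u₂ hu₂_cont)
    (fun i x hx => hu₁x_deriv i x hx 0 hT0)
    (fun i x hx => hu₂x_deriv i x hx 0 hT0)
    (fun i j x hx => hu₁xx_deriv i j x hx 0 hT0)
    (fun i j x hx => hu₂xx_deriv i j x hx 0 hT0)
    (main u₁ u₁t u₁x u₁xx hu₁_cont hu₁x_cont hu₁xx_cont hu₁t_cont hPDE₁)
    (main u₂ u₂t u₂x u₂xx hu₂_cont hu₂x_cont hu₂xx_cont hu₂t_cont hPDE₂)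
    (hbdry u₁ hu₁_cont hbc₁) (hbdry u₂ hu₂_cont hbc₂)
end
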